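/- arXiv:2506.17979 — 6 statements merged into one kernel-verified Lean document; each statement's English description precedes it below -/
import Mathlib

section
/- Let (E, ρ) be a metric space, m a Borel measure on E that is finite on compact sets, N a measurable kernel from E to E, and J a Borel measure on E × E that is symmetric (invariant under the flip (x,y) ↦ (y,x)) and satisfies J(A) ≤ D₂ ∫_E N(x, A_x) dm(x) for every Borel A ⊆ E × E and some D₂ > 0, where A_x = {y : (x,y) ∈ A}. Assume there exist β > 0 and M_β < ∞ such that ∫_E min(1, ρ(x,y)^{β}) dN(x)(y) ≤ M_β for m-almost every x ∈ E. Let p ∈ [1, ∞) and u ∈ L^p(E; m). Then for all open sets U, V ⊆ E such that the closure of U is compact and contained in V, one has ∫_{U × (E∖V)} |u(x) − u(y)| dJ(x,y) < ∞. -/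
open MeasureTheory ENNReal

/-!
Compactness of `closure U` inside the open set `V` gives a gap `δ > 0` between `U` and `Vᶜ`.
By Markov's inequality and the moment bound on `N`, for `m`-a.e. `x` the kernel puts mass at most
`K = M_β / min(1, δ^β)` on any set at distance `≥ δ` from `x`. Combined with the domination of `J`
by `D₂ · m ⊗ N` and its symmetry, both marginals of `J` restricted to `U × Vᶜ` are dominated by
`D₂ K · m`; in particular this restriction is a finite measure. Then `u ∈ L^p(m)` lies in
`L^p ⊆ L^1` of each marginal, so `(x, y) ↦ u x - u y` is integrable.
-/

theorem IsCompact.exists_pos_forall_le_dist_compl {E : Type*} [PseudoMetricSpace E] {s t : Set E}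
    (hs : IsCompact s) (ht : IsOpen t) (hst : s ⊆ t) :
    ∃ δ > 0, ∀ x ∈ s, ∀ y ∈ tᶜ, δ ≤ dist x y := by
  obtain ⟨δ, hδ, hδt⟩ := hs.exists_thickening_subset_open ht hst
  refine ⟨δ, hδ, fun x hx y hy => not_lt.1 fun hxy => hy (hδt ?_)⟩
  exact Metric.mem_thickening_iff.2 ⟨x, hx, by rwa [dist_comm]⟩

theorem measure_le_lintegral_min_one_rpow_div {E : Type*} [PseudoMetricSpace E]
    [MeasurableSpace E] [OpensMeasurableSpace E] (μ : Measure E) (x : E) {δ β : ℝ}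
    (hδ : 0 < δ) (hβ : 0 ≤ β) {t : Set E} (ht : ∀ y ∈ t, δ ≤ dist x y) :
    μ t ≤ (∫⁻ y, ENNReal.ofReal (min 1 (dist x y ^ β)) ∂μ) / ENNReal.ofReal (min 1 (δ ^ β)) := by
  have hpos : 0 < min 1 (δ ^ β) := lt_min one_pos (Real.rpow_pos_of_pos hδ β)
  refine (measure_mono fun y hy => ?_).trans
    (meas_ge_le_lintegral_div (by fun_prop) (ENNReal.ofReal_pos.2 hpos).ne' ofReal_ne_top)
  exact ofReal_le_ofReal (min_le_min_left _ (Real.rpow_le_rpow hδ.le (ht y hy) hβ))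

section Marginals

variable {α β : Type*} [MeasurableSpace α] [MeasurableSpace β]

theorem lintegral_measure_prodMk_preimage_prod (N : α → Measure β) (m : Measure α)
    {s : Set α} (hs : MeasurableSet s) (t : Set β) :
    ∫⁻ x, N x (Prod.mk x ⁻¹' s ×ˢ t) ∂m = ∫⁻ x in s, N x t ∂m := by
  rw [← lintegral_indicator hs]
  congr 1 with x
  by_cases hx : x ∈ s <;> simp [hx]

theorem map_fst_restrict_prod_le_smul {J : Measure (α × β)} {N : α → Measure β}
    {m : Measure α} {D K : ℝ≥0∞}
    (hJ : ∀ A : Set (α × β), MeasurableSet A → J A ≤ D * ∫⁻ x, N x (Prod.mk x ⁻¹' A) ∂m)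
    {s : Set α} {t : Set β} (hs : MeasurableSet s) (ht : MeasurableSet t)
    (hN : ∀ᵐ x ∂m, x ∈ s → N x t ≤ K) :
    (J.restrict (s ×ˢ t)).map Prod.fst ≤ (D * K) • m.restrict s := by
  refine Measure.le_iff.2 fun r hr => ?_
  have hrs : MeasurableSet (r ∩ s) := hr.inter hs
  have hpre : Prod.fst ⁻¹' r ∩ s ×ˢ t = (r ∩ s) ×ˢ t := by
    ext z
    simp [and_assoc]
  rw [Measure.map_apply measurable_fst hr, Measure.restrict_apply (measurable_fst hr), hpre,
    Measure.smul_apply, Measure.restrict_apply hr, smul_eq_mul]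
  calc J ((r ∩ s) ×ˢ t) ≤ D * ∫⁻ x in r ∩ s, N x t ∂m := by
        rw [← lintegral_measure_prodMk_preimage_prod N m hrs t]
        exact hJ _ (hrs.prod ht)
    _ ≤ D * ∫⁻ _ in r ∩ s, K ∂m := by
        gcongr 1
        refine lintegral_mono_ae ((ae_restrict_iff' hrs).2 ?_)
        exact hN.mono fun x hx hxrs => hx hxrs.2
    _ = D * K * m (r ∩ s) := by rw [setLIntegral_const, mul_assoc]

theorem map_snd_restrict_prod_eq_of_map_swap {J : Measure (α × α)} (hJ : J.map Prod.swap = J)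
    {s t : Set α} (hs : MeasurableSet s) (ht : MeasurableSet t) :
    (J.restrict (s ×ˢ t)).map Prod.snd = (J.restrict (t ×ˢ s)).map Prod.fst := by
  conv_rhs => rw [← hJ, Measure.restrict_map measurable_swap (ht.prod hs),
    Set.preimage_swap_prod, Measure.map_map measurable_fst measurable_swap]
  rfl

end Marginals

theorem integrable_sub_of_map_le_smul {α F : Type*} [MeasurableSpace α] [NormedAddCommGroup F]
    {ν : Measure (α × α)} [IsFiniteMeasure ν] {m : Measure α} {C : ℝ≥0∞} (hC : C ≠ ∞)
    (hfst : ν.map Prod.fst ≤ C • m) (hsnd : ν.map Prod.snd ≤ C • m)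
    {p : ℝ≥0∞} (hp : 1 ≤ p) {u : α → F} (hu : MemLp u p m) :
    Integrable (fun z => u z.1 - u z.2) ν := by
  have h₁ := ((hu.of_measure_le_smul hC hfst).integrable hp).comp_aemeasurable
    measurable_fst.aemeasurable
  have h₂ := ((hu.of_measure_le_smul hC hsnd).integrable hp).comp_aemeasurable
    measurable_snd.aemeasurable
  exact h₁.sub h₂

theorem stmt_3_general {E : Type*} [MetricSpace E] [MeasurableSpace E] [BorelSpace E]
    (m : Measure E) [IsFiniteMeasureOnCompacts m]
    (N : E → Measure E)
    (J : Measure (E × E)) (hsym : J.map Prod.swap = J)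
    (D₂ : ℝ)
    (hJ : ∀ A : Set (E × E), MeasurableSet A →
      J A ≤ ENNReal.ofReal D₂ * ∫⁻ x, N x (Prod.mk x ⁻¹' A) ∂m)
    (β : ℝ) (hβ : 0 < β) (Mβ : ℝ≥0∞) (hMβ : Mβ < ⊤)
    (hbound : ∀ᵐ x ∂m, ∫⁻ y, ENNReal.ofReal (min 1 (dist x y ^ β)) ∂(N x) ≤ Mβ)
    (p : ℝ) (hp : 1 ≤ p) (u : E → ℝ) (hu : MemLp u (ENNReal.ofReal p) m)
    (U V : Set E) (hU : IsOpen U) (hV : IsOpen V)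
    (hUc : IsCompact (closure U)) (hUV : closure U ⊆ V) :
    ∫⁻ z in U ×ˢ Vᶜ, ENNReal.ofReal |u z.1 - u z.2| ∂J < ⊤ := by
  obtain ⟨δ, hδ, hgap⟩ := hUc.exists_pos_forall_le_dist_compl hV hUV
  set K := Mβ / ENNReal.ofReal (min 1 (δ ^ β))
  have hK : K ≠ ∞ := div_ne_top hMβ.ne
    (ENNReal.ofReal_pos.2 (lt_min one_pos (Real.rpow_pos_of_pos hδ β))).ne'
  have hN_le : ∀ᵐ x ∂m, ∀ t : Set E, (∀ y ∈ t, δ ≤ dist x y) → N x t ≤ K :=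
    hbound.mono fun x hx t ht => (measure_le_lintegral_min_one_rpow_div (N x) x hδ hβ.le ht).trans
      (ENNReal.div_le_div_right hx _)
  set C := ENNReal.ofReal D₂ * K
  have hfst : (J.restrict (U ×ˢ Vᶜ)).map Prod.fst ≤ C • m.restrict U :=
    map_fst_restrict_prod_le_smul hJ hU.measurableSet hV.measurableSet.compl <|
      hN_le.mono fun x hx hxU => hx _ fun y hy => hgap x (subset_closure hxU) y hy
  have hsnd : (J.restrict (U ×ˢ Vᶜ)).map Prod.snd ≤ C • m.restrict Vᶜ := by
    rw [map_snd_restrict_prod_eq_of_map_swap hsym hU.measurableSet hV.measurableSet.compl]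
    refine map_fst_restrict_prod_le_smul hJ hV.measurableSet.compl hU.measurableSet <|
      hN_le.mono fun x hx hxV => hx _ fun y hy => ?_
    rw [dist_comm]
    exact hgap y (subset_closure hy) x hxV
  have hC : C ≠ ∞ := mul_ne_top ofReal_ne_top hK
  have : IsFiniteMeasure (J.restrict (U ×ˢ Vᶜ)) := ⟨by
    calc J.restrict (U ×ˢ Vᶜ) Set.univ = (J.restrict (U ×ˢ Vᶜ)).map Prod.fst Set.univ := by
          rw [Measure.map_apply measurable_fst MeasurableSet.univ, Set.preimage_univ]
      _ ≤ C * m U := by simpa using hfst Set.univ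
      _ < ∞ := mul_lt_top hC.lt_top ((measure_mono subset_closure).trans_lt hUc.measure_lt_top)⟩
  exact (integrable_sub_of_map_le_smul hC (hfst.trans (by gcongr; exact Measure.restrict_le_self))
    (hsnd.trans (by gcongr; exact Measure.restrict_le_self)) (ENNReal.one_le_ofReal.2 hp)
    hu).abs.lintegral_lt_top

/-- Let `(E, ρ)` be a metric space, `m` a Borel measure finite on
compacts, `N` a measurable kernel from `E` to `E`, and `J` a symmetric Borel measure
on `E × E` with `J(A) ≤ D₂ ∫ N(x, A_x) dm(x)`. Assume there are `β > 0`, `M_β < ∞`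
with `∫ min(1, ρ(x,y)^β) N(x, dy) ≤ M_β` for `m`-a.e. `x`. If `p ∈ [1,∞)` and
`u ∈ L^p(E;m)`, then for all open `U, V` with `closure U` compact and contained in
`V`, `∫_{U × (E∖V)} |u(x) − u(y)| dJ < ∞`. -/
theorem stmt_3 {E : Type*} [MetricSpace E] [MeasurableSpace E] [BorelSpace E]
    (m : Measure E) [IsFiniteMeasureOnCompacts m]
    (N : E → Measure E)
    (hN : ∀ A : Set E, MeasurableSet A → Measurable fun x => N x A)
    (J : Measure (E × E)) (hsym : J.map Prod.swap = J)
    (D₂ : ℝ) (hD₂ : 0 < D₂)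
    (hJ : ∀ A : Set (E × E), MeasurableSet A →
      J A ≤ ENNReal.ofReal D₂ * ∫⁻ x, N x (Prod.mk x ⁻¹' A) ∂m)
    (β : ℝ) (hβ : 0 < β) (Mβ : ℝ≥0∞) (hMβ : Mβ < ⊤)
    (hbound : ∀ᵐ x ∂m, ∫⁻ y, ENNReal.ofReal (min 1 (dist x y ^ β)) ∂(N x) ≤ Mβ)
    (p : ℝ) (hp : 1 ≤ p) (u : E → ℝ) (hu : MemLp u (ENNReal.ofReal p) m)
    (U V : Set E) (hU : IsOpen U) (hV : IsOpen V)
    (hUc : IsCompact (closure U)) (hUV : closure U ⊆ V) :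
    ∫⁻ z in U ×ˢ Vᶜ, ENNReal.ofReal |u z.1 - u z.2| ∂J < ⊤ :=
  stmt_3_general m N J hsym D₂ hJ β hβ Mβ hMβ hbound p hp u hu U V hU hV hUc hUV
end

section
/- Assume w_{p₁} ∈ L¹(E; m) and let u : E → ℝ be locally integrable with respect to m (integrable on every compact set). Then the following are equivalent: (1) w_{p₁} · |u| ∈ L¹(E; m); (2) for all open sets U, V with U ⋐ V, the closure of V compact, and o ∈ V, one has ∫_{U × (E∖V)} |u(x) − u(y)| dJ(x,y) < ∞. -/
open MeasureTheory ENNReal Metric Set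

/-! On a rectangle `U × (E ∖ V)` with `U ⋐ V`, the first coordinate stays in a bounded set and
`ρ(x, y)` is bounded below, so the kernel `ρ(x, y)^{-q}` is at most a constant times `w_p(y)`;
if moreover `ρ(x, o) ≤ ρ(y, o)`, then `ρ(x, y) ≤ 2 ρ(y, o)` and the kernel `ρ(x, y)^{-p}` is at
least `2^{-p} w_p(y)`.

Integrating `|u(x) - u(y)| ≤ |u(x)| + |u(y)|` against the upper bound and applying Tonelli bounds
the `J`-integral over the rectangle by `∫_U |u| · ∫ w_p + m(U) ∫ w_p |u|`. Conversely, for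
`U` a small ball around `o` and `V` the ball of twice the radius, integrating
`|u(y)| ≤ |u(x) - u(y)| + |u(x)|` against the lower bound bounds `m(U) ∫_{E∖V} w_p |u|`, while on
the compact set `closure V` we have `w_p |u| ≤ |u|`, which is integrable. -/

lemma ENNReal.rpow_neg_le_rpow_neg {a b : ℝ≥0∞} (hab : a ≤ b) {p : ℝ} (hp : 0 ≤ p) :
    b ^ (-p) ≤ a ^ (-p) := by
  rw [ENNReal.rpow_neg, ENNReal.rpow_neg]
  exact ENNReal.inv_le_inv.mpr (ENNReal.rpow_le_rpow hab hp)

lemma ENNReal.rpow_mul_rpow_neg {a : ℝ≥0∞} (h₀ : a ≠ 0) (hT : a ≠ ∞) (p : ℝ) :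
    a ^ p * a ^ (-p) = 1 := by
  rw [← ENNReal.rpow_add _ _ h₀ hT, add_neg_cancel, ENNReal.rpow_zero]

section PowerWeight

variable {E : Type*} [PseudoMetricSpace E]

/-- The weight `w_p` of the paper. At `y = o` the power is `0 ^ (-p) = ∞`, so the weight is `1`. -/
noncomputable def powerWeight (o : E) (p : ℝ) (y : E) : ℝ≥0∞ := min 1 (edist y o ^ (-p))

variable {o x y : E} {p q : ℝ}

lemma measurable_powerWeight [MeasurableSpace E] [OpensMeasurableSpace E] :
    Measurable (powerWeight o p) := by
  unfold powerWeight; fun_prop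

lemma rpow_neg_le_powerWeight {R : ℝ≥0∞} (hp : 0 ≤ p) (hR : 1 ≤ R) (hyR : edist y o ≤ R) :
    R ^ (-p) ≤ powerWeight o p y :=
  le_min ((ENNReal.rpow_le_rpow_of_exponent_le hR (neg_nonpos.2 hp)).trans_eq ENNReal.rpow_zero)
    (ENNReal.rpow_neg_le_rpow_neg hyR hp)

lemma two_rpow_neg_mul_powerWeight_le (hp : 0 ≤ p) (hxy : edist x o ≤ edist y o) :
    2 ^ (-p) * powerWeight o p y ≤ edist x y ^ (-p) := by
  have hxy₂ : edist x y ≤ 2 * edist y o :=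
    calc edist x y ≤ edist x o + edist o y := edist_triangle _ _ _
      _ ≤ edist y o + edist y o := by rw [edist_comm o y]; gcongr
      _ = 2 * edist y o := (two_mul _).symm
  calc 2 ^ (-p) * powerWeight o p y ≤ 2 ^ (-p) * edist y o ^ (-p) := by
        gcongr; exact min_le_right _ _
    _ = (2 * edist y o) ^ (-p) :=
        (ENNReal.mul_rpow_of_ne_top ofNat_ne_top (edist_ne_top _ _) _).symm
    _ ≤ edist x y ^ (-p) := ENNReal.rpow_neg_le_rpow_neg hxy₂ hp

/-- With `R' = max R 1`: for `ρ(y, o) ≤ 2R'` the kernel is at most `δ^{-q}` and the weight at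
least `(2R')^{-p}`; for `ρ(y, o) > 2R'` the distance `ρ(x, y)` is at least `max(R', ρ(y, o)/2)`. -/
lemma exists_edist_rpow_neg_le_mul_powerWeight (o : E) (hp : 0 ≤ p) (hpq : p ≤ q)
    {δ R : ℝ≥0∞} (hδ : δ ≠ 0) (hR : R ≠ ∞) :
    ∃ M ≠ ∞, ∀ x y : E, edist x o ≤ R → δ ≤ edist x y →
      edist x y ^ (-q) ≤ M * powerWeight o p y := by
  set R' := max R 1
  have hR'₁ : 1 ≤ R' := le_max_right _ _
  have hR'T : R' ≠ ∞ := max_ne_top hR one_ne_top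
  have h2R'₀ : 2 * R' ≠ 0 := mul_ne_zero two_ne_zero (one_pos.trans_le hR'₁).ne'
  have h2R'T : 2 * R' ≠ ∞ := mul_ne_top ofNat_ne_top hR'T
  refine ⟨δ ^ (-q) * (2 * R') ^ p + 2 ^ p, ?_, fun x y hxo hδxy => ?_⟩
  · have : δ ^ (-q) ≠ ∞ := by simp [ENNReal.rpow_eq_top_iff, hδ, hp.trans hpq]
    have : (2 * R') ^ p ≠ ∞ := ENNReal.rpow_ne_top_of_nonneg hp h2R'T
    finiteness
  have hxR' : edist x o ≤ R' := hxo.trans (le_max_left _ _)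
  rcases le_or_gt (edist y o) (2 * R') with hnear | hfar
  · calc edist x y ^ (-q) ≤ δ ^ (-q) := ENNReal.rpow_neg_le_rpow_neg hδxy (hp.trans hpq)
      _ = δ ^ (-q) * (2 * R') ^ p * (2 * R') ^ (-p) := by
          rw [mul_assoc, ENNReal.rpow_mul_rpow_neg h2R'₀ h2R'T, mul_one]
      _ ≤ δ ^ (-q) * (2 * R') ^ p * powerWeight o p y := by
          gcongr
          exact rpow_neg_le_powerWeight hp (hR'₁.trans (le_mul_of_one_le_left' one_le_two)) hnear
      _ ≤ (δ ^ (-q) * (2 * R') ^ p + 2 ^ p) * powerWeight o p y := by gcongr; exact le_self_add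
  · have hR'xy : R' ≤ edist x y := by
      refine (ENNReal.add_le_add_iff_right hR'T).1 ?_
      calc R' + R' = 2 * R' := (two_mul _).symm
        _ ≤ edist y o := hfar.le
        _ ≤ edist y x + edist x o := edist_triangle _ _ _
        _ ≤ edist x y + R' := by rw [edist_comm]; gcongr
    have hyo : edist y o ≤ 2 * edist x y :=
      calc edist y o ≤ edist y x + edist x o := edist_triangle _ _ _
        _ ≤ edist x y + edist x y := by rw [edist_comm]; gcongr; exact hxR'.trans hR'xy
        _ = 2 * edist x y := (two_mul _).symm
    have hxy₁ : 1 ≤ edist x y := hR'₁.trans hR'xy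
    calc edist x y ^ (-q) ≤ edist x y ^ (-p) :=
          ENNReal.rpow_le_rpow_of_exponent_le hxy₁ (neg_le_neg hpq)
      _ = 2 ^ p * (2 * edist x y) ^ (-p) := by
          rw [ENNReal.mul_rpow_of_ne_top ofNat_ne_top (edist_ne_top _ _), ← mul_assoc,
            ENNReal.rpow_mul_rpow_neg two_ne_zero ofNat_ne_top, one_mul]
      _ ≤ 2 ^ p * powerWeight o p y := by
          gcongr
          exact rpow_neg_le_powerWeight hp (hxy₁.trans (le_mul_of_one_le_left' one_le_two)) hyo
      _ ≤ (δ ^ (-q) * (2 * R') ^ p + 2 ^ p) * powerWeight o p y := by gcongr; exact le_add_self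

lemma exists_edist_le_and_le_edist_of_closure_subset {U V : Set E} (hUc : IsCompact (closure U))
    (hV : IsOpen V) (hUV : closure U ⊆ V) (o : E) :
    ∃ R ≠ ∞, ∃ δ ≠ 0, ∀ x ∈ U, ∀ y ∉ V, edist x o ≤ R ∧ δ ≤ edist x y := by
  obtain ⟨C, hC⟩ := hUc.isBounded.subset_closedBall o
  obtain ⟨δ, hδ, hδV⟩ := hUc.exists_thickening_subset_open hV hUV
  refine ⟨ENNReal.ofReal C, ofReal_ne_top, ENNReal.ofReal δ, by simpa using hδ,
    fun x hx y hy => ⟨?_, ?_⟩⟩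
  · rw [edist_dist]
    exact ENNReal.ofReal_le_ofReal (mem_closedBall.1 (hC (subset_closure hx)))
  · have hy' : y ∉ thickening δ (closure U) := fun h => hy (hδV h)
    rw [mem_thickening_iff_infEDist_lt, not_lt] at hy'
    rw [edist_comm]
    exact hy'.trans (infEDist_le_edist_of_mem (subset_closure hx))

lemma exists_edist_rpow_neg_le_mul_powerWeight_of_closure_subset (o : E) (hp : 0 ≤ p)
    (hpq : p ≤ q) {U V : Set E} (hUc : IsCompact (closure U)) (hV : IsOpen V)
    (hUV : closure U ⊆ V) :
    ∃ M ≠ ∞, ∀ x ∈ U, ∀ y ∈ Vᶜ, edist x y ^ (-q) ≤ M * powerWeight o p y := by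
  obtain ⟨R, hR, δ, hδ, hUV'⟩ := exists_edist_le_and_le_edist_of_closure_subset hUc hV hUV o
  obtain ⟨M, hM, hk⟩ := exists_edist_rpow_neg_le_mul_powerWeight o hp hpq hδ hR
  exact ⟨M, hM, fun x hx y hy => hk x y (hUV' x hx y hy).1 (hUV' x hx y hy).2⟩

end PowerWeight

section Integrals

variable {X : Type*} [MeasurableSpace X]

lemma Measure.le_smul_withDensity_of_forall_le {J μ : Measure X} {c : ℝ≥0∞} {g : X → ℝ≥0∞}
    (h : ∀ A, MeasurableSet A → J A ≤ c * ∫⁻ z in A, g z ∂μ) : J ≤ c • μ.withDensity g :=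
  Measure.le_iff.2 fun A hA => by
    rw [Measure.smul_apply, withDensity_apply _ hA, smul_eq_mul]; exact h A hA

lemma Measure.smul_withDensity_le_of_forall_le {J μ : Measure X} {c : ℝ≥0∞} {g : X → ℝ≥0∞}
    (h : ∀ A, MeasurableSet A → c * ∫⁻ z in A, g z ∂μ ≤ J A) : c • μ.withDensity g ≤ J :=
  Measure.le_iff.2 fun A hA => by
    rw [Measure.smul_apply, withDensity_apply _ hA, smul_eq_mul]; exact h A hA

lemma setLIntegral_smul_withDensity {μ : Measure X} (c : ℝ≥0∞) {g F : X → ℝ≥0∞}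
    (hg : AEMeasurable g μ) (hF : AEMeasurable F μ) {S : Set X} (hS : MeasurableSet S) :
    ∫⁻ z in S, F z ∂(c • μ.withDensity g) = c * ∫⁻ z in S, g z * F z ∂μ := by
  rw [Measure.restrict_smul, lintegral_smul_measure, smul_eq_mul,
    setLIntegral_withDensity_eq_lintegral_mul₀ hg hF hS]
  rfl

lemma setLIntegral_prod_mul {Y : Type*} [MeasurableSpace Y] {μ : Measure X} {ν : Measure Y}
    [SFinite μ] [SFinite ν] {f : X → ℝ≥0∞} {g : Y → ℝ≥0∞} {s : Set X} {t : Set Y}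
    (hf : AEMeasurable f (μ.restrict s)) (hg : AEMeasurable g (ν.restrict t)) :
    ∫⁻ z in s ×ˢ t, f z.1 * g z.2 ∂(μ.prod ν) = (∫⁻ x in s, f x ∂μ) * ∫⁻ y in t, g y ∂ν := by
  rw [← Measure.prod_restrict]
  exact lintegral_prod_mul hf hg

variable {μ : Measure X} {G : Type*} [SeminormedAddCommGroup G] {u : X → G}

lemma aemeasurable_enorm_sub_prod (hu : AEStronglyMeasurable u μ) :
    AEMeasurable (fun z : X × X => ‖u z.1 - u z.2‖ₑ) (μ.prod μ) :=
  (hu.comp_fst.sub hu.comp_snd).enorm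

variable [SFinite μ] {w : X → ℝ≥0∞} {k : X × X → ℝ≥0∞} {U S : Set X} {M : ℝ≥0∞}

lemma setLIntegral_prod_mul_enorm_sub_le (hu : AEStronglyMeasurable u μ) (hw : Measurable w)
    (hU : MeasurableSet U) (hS : MeasurableSet S) (hM : M ≠ ∞)
    (hk : ∀ x ∈ U, ∀ y ∈ S, k (x, y) ≤ M * w y) :
    ∫⁻ z in U ×ˢ S, k z * ‖u z.1 - u z.2‖ₑ ∂(μ.prod μ) ≤
      M * ((∫⁻ x in U, ‖u x‖ₑ ∂μ) * (∫⁻ y in S, w y ∂μ) +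
        μ U * ∫⁻ y in S, w y * ‖u y‖ₑ ∂μ) := by
  have hpt : ∀ z ∈ U ×ˢ S, k z * ‖u z.1 - u z.2‖ₑ ≤
      M * (‖u z.1‖ₑ * w z.2) + M * (1 * (w z.2 * ‖u z.2‖ₑ)) := by
    rintro ⟨x, y⟩ ⟨hx, hy⟩
    calc k (x, y) * ‖u x - u y‖ₑ ≤ M * w y * (‖u x‖ₑ + ‖u y‖ₑ) :=
          mul_le_mul' (hk x hx y hy) enorm_sub_le
      _ = _ := by ring
  have hmeas : AEMeasurable (fun z : X × X => M * (‖u z.1‖ₑ * w z.2))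
      ((μ.prod μ).restrict (U ×ˢ S)) :=
    ((hu.enorm.comp_fst.mul (hw.comp measurable_snd).aemeasurable).const_mul M).restrict
  calc ∫⁻ z in U ×ˢ S, k z * ‖u z.1 - u z.2‖ₑ ∂(μ.prod μ)
      ≤ ∫⁻ z in U ×ˢ S, M * (‖u z.1‖ₑ * w z.2) + M * (1 * (w z.2 * ‖u z.2‖ₑ)) ∂(μ.prod μ) :=
        setLIntegral_mono' (hU.prod hS) hpt
    _ = _ := by
      rw [lintegral_add_left' hmeas, lintegral_const_mul' _ _ hM, lintegral_const_mul' _ _ hM,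
        setLIntegral_prod_mul hu.enorm.restrict hw.aemeasurable.restrict,
        setLIntegral_prod_mul (f := fun _ => 1) (g := fun y => w y * ‖u y‖ₑ) aemeasurable_const
          (hw.aemeasurable.mul hu.enorm).restrict,
        setLIntegral_one, mul_add]

lemma mul_measure_mul_setLIntegral_le (hu : AEStronglyMeasurable u μ) (hw : Measurable w)
    (hU : MeasurableSet U) (hS : MeasurableSet S) (hM : M ≠ ∞) {c : ℝ≥0∞}
    (hk_le : ∀ x ∈ U, ∀ y ∈ S, k (x, y) ≤ M * w y)
    (hk_ge : ∀ x ∈ U, ∀ y ∈ S, c * w y ≤ k (x, y)) :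
    c * (μ U * ∫⁻ y in S, w y * ‖u y‖ₑ ∂μ) ≤
      ∫⁻ z in U ×ˢ S, k z * ‖u z.1 - u z.2‖ₑ ∂(μ.prod μ) +
        M * ((∫⁻ x in U, ‖u x‖ₑ ∂μ) * ∫⁻ y in S, w y ∂μ) := by
  have hpt : ∀ z ∈ U ×ˢ S, c * (1 * (w z.2 * ‖u z.2‖ₑ)) ≤
      k z * ‖u z.1 - u z.2‖ₑ + M * (‖u z.1‖ₑ * w z.2) := by
    rintro ⟨x, y⟩ ⟨hx, hy⟩
    have hu_y : ‖u y‖ₑ ≤ ‖u x - u y‖ₑ + ‖u x‖ₑ := by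
      rw [add_comm]
      calc ‖u y‖ₑ = ‖u x - (u x - u y)‖ₑ := by rw [_root_.sub_sub_cancel]
        _ ≤ _ := enorm_sub_le
    calc c * (1 * (w y * ‖u y‖ₑ)) = c * w y * ‖u y‖ₑ := by ring
      _ ≤ k (x, y) * (‖u x - u y‖ₑ + ‖u x‖ₑ) := mul_le_mul' (hk_ge x hx y hy) hu_y
      _ = k (x, y) * ‖u x - u y‖ₑ + k (x, y) * ‖u x‖ₑ := mul_add _ _ _
      _ ≤ k (x, y) * ‖u x - u y‖ₑ + M * w y * ‖u x‖ₑ := by gcongr; exact hk_le x hx y hy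
      _ = k (x, y) * ‖u x - u y‖ₑ + M * (‖u x‖ₑ * w y) := by ring
  have hmeas : AEMeasurable (fun z : X × X => M * (‖u z.1‖ₑ * w z.2))
      ((μ.prod μ).restrict (U ×ˢ S)) :=
    ((hu.enorm.comp_fst.mul (hw.comp measurable_snd).aemeasurable).const_mul M).restrict
  calc c * (μ U * ∫⁻ y in S, w y * ‖u y‖ₑ ∂μ)
      = c * ∫⁻ z in U ×ˢ S, 1 * (w z.2 * ‖u z.2‖ₑ) ∂(μ.prod μ) := by
        rw [setLIntegral_prod_mul (f := fun _ => 1) (g := fun y => w y * ‖u y‖ₑ) aemeasurable_const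
          (hw.aemeasurable.mul hu.enorm).restrict,
          setLIntegral_one]
    _ ≤ ∫⁻ z in U ×ˢ S, c * (1 * (w z.2 * ‖u z.2‖ₑ)) ∂(μ.prod μ) := lintegral_const_mul_le _ _
    _ ≤ ∫⁻ z in U ×ˢ S, k z * ‖u z.1 - u z.2‖ₑ + M * (‖u z.1‖ₑ * w z.2) ∂(μ.prod μ) :=
        setLIntegral_mono' (hU.prod hS) hpt
    _ = _ := by
      rw [lintegral_add_right' _ hmeas, lintegral_const_mul' _ _ hM,
        setLIntegral_prod_mul hu.enorm.restrict hw.aemeasurable.restrict]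

end Integrals

section Kernel

variable {E : Type*} [MetricSpace E] [SecondCountableTopology E] [MeasurableSpace E]
  [BorelSpace E] {m : Measure E} [SFinite m]
  {J : Measure (E × E)} {o : E} {p q : ℝ} {c : ℝ≥0∞}
  {G : Type*} [NormedAddCommGroup G] {u : E → G} {U V : Set E}

theorem setLIntegral_enorm_sub_lt_top [IsFiniteMeasureOnCompacts m] (hp : 0 ≤ p) (hpq : p ≤ q)
    (hc : c ≠ ∞)
    (hJ : ∀ A, MeasurableSet A → J A ≤ c * ∫⁻ z in A, edist z.1 z.2 ^ (-q) ∂(m.prod m))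
    (hw : ∫⁻ y, powerWeight o p y ∂m < ∞) (hu : LocallyIntegrable u m)
    (huw : ∫⁻ y, powerWeight o p y * ‖u y‖ₑ ∂m < ∞)
    (hU : IsOpen U) (hUc : IsCompact (closure U)) (hUV : closure U ⊆ V) (hV : IsOpen V) :
    ∫⁻ z in U ×ˢ Vᶜ, ‖u z.1 - u z.2‖ₑ ∂J < ∞ := by
  obtain ⟨M, hM, hk⟩ :=
    exists_edist_rpow_neg_le_mul_powerWeight_of_closure_subset o hp hpq hUc hV hUV
  have hUu : ∫⁻ x in U, ‖u x‖ₑ ∂m < ∞ :=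
    ((hu.integrableOn_isCompact hUc).mono_set subset_closure).2
  have hmU : m U < ∞ := (measure_mono subset_closure).trans_lt hUc.measure_lt_top
  have hwV : ∫⁻ y in Vᶜ, powerWeight o p y ∂m < ∞ := (setLIntegral_le_lintegral _ _).trans_lt hw
  have huwV : ∫⁻ y in Vᶜ, powerWeight o p y * ‖u y‖ₑ ∂m < ∞ :=
    (setLIntegral_le_lintegral _ _).trans_lt huw
  calc ∫⁻ z in U ×ˢ Vᶜ, ‖u z.1 - u z.2‖ₑ ∂J
      ≤ ∫⁻ z in U ×ˢ Vᶜ, ‖u z.1 - u z.2‖ₑ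
          ∂(c • (m.prod m).withDensity fun z => edist z.1 z.2 ^ (-q)) :=
        lintegral_mono' (Measure.restrict_mono subset_rfl
          (Measure.le_smul_withDensity_of_forall_le hJ)) le_rfl
    _ = c * ∫⁻ z in U ×ˢ Vᶜ, edist z.1 z.2 ^ (-q) * ‖u z.1 - u z.2‖ₑ ∂(m.prod m) :=
        setLIntegral_smul_withDensity c (by fun_prop)
          (aemeasurable_enorm_sub_prod hu.aestronglyMeasurable)
          (hU.measurableSet.prod hV.measurableSet.compl)
    _ ≤ c * (M * ((∫⁻ x in U, ‖u x‖ₑ ∂m) * (∫⁻ y in Vᶜ, powerWeight o p y ∂m) +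
          m U * ∫⁻ y in Vᶜ, powerWeight o p y * ‖u y‖ₑ ∂m)) := by
        gcongr
        exact setLIntegral_prod_mul_enorm_sub_le hu.aestronglyMeasurable measurable_powerWeight
          hU.measurableSet hV.measurableSet.compl hM hk
    _ < ∞ := by finiteness

theorem lintegral_powerWeight_mul_lt_top [m.IsOpenPosMeasure] (hp : 0 ≤ p) (hc : c ≠ 0)
    (hJ : ∀ A, MeasurableSet A → c * ∫⁻ z in A, edist z.1 z.2 ^ (-p) ∂(m.prod m) ≤ J A)
    (hw : ∫⁻ y, powerWeight o p y ∂m < ∞) (hu : LocallyIntegrable u m)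
    (hU : IsOpen U) (hUne : U.Nonempty) (hUc : IsCompact (closure U)) (hUV : closure U ⊆ V)
    (hV : IsOpen V) (hVc : IsCompact (closure V))
    (hUVo : ∀ x ∈ U, ∀ y ∈ Vᶜ, edist x o ≤ edist y o)
    (h : ∫⁻ z in U ×ˢ Vᶜ, ‖u z.1 - u z.2‖ₑ ∂J < ∞) :
    ∫⁻ y, powerWeight o p y * ‖u y‖ₑ ∂m < ∞ := by
  obtain ⟨M, hM, hk⟩ :=
    exists_edist_rpow_neg_le_mul_powerWeight_of_closure_subset o hp le_rfl hUc hV hUV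
  have hkF : ∫⁻ z in U ×ˢ Vᶜ, edist z.1 z.2 ^ (-p) * ‖u z.1 - u z.2‖ₑ ∂(m.prod m) < ∞ := by
    refine ENNReal.lt_top_of_mul_ne_top_right ?_ hc
    rw [← setLIntegral_smul_withDensity c (g := fun z => edist z.1 z.2 ^ (-p)) (by fun_prop)
      (aemeasurable_enorm_sub_prod hu.aestronglyMeasurable)
      (hU.measurableSet.prod hV.measurableSet.compl)]
    exact (lintegral_mono' (Measure.restrict_mono subset_rfl
      (Measure.smul_withDensity_le_of_forall_le hJ)) le_rfl).trans_lt h |>.ne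
  have hUu : ∫⁻ x in U, ‖u x‖ₑ ∂m < ∞ :=
    ((hu.integrableOn_isCompact hUc).mono_set subset_closure).2
  have hwV : ∫⁻ y in Vᶜ, powerWeight o p y ∂m < ∞ := (setLIntegral_le_lintegral _ _).trans_lt hw
  have huwVc : ∫⁻ y in Vᶜ, powerWeight o p y * ‖u y‖ₑ ∂m < ∞ := by
    have hmain := mul_measure_mul_setLIntegral_le (k := fun z => edist z.1 z.2 ^ (-p))
      hu.aestronglyMeasurable measurable_powerWeight
      hU.measurableSet hV.measurableSet.compl hM hk
      (fun x hx y hy => two_rpow_neg_mul_powerWeight_le hp (hUVo x hx y hy))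
    have hfin : (2 : ℝ≥0∞) ^ (-p) * (m U * ∫⁻ y in Vᶜ, powerWeight o p y * ‖u y‖ₑ ∂m) ≠ ∞ :=
      ne_top_of_le_ne_top (by finiteness) hmain
    exact ENNReal.lt_top_of_mul_ne_top_right
      (ENNReal.lt_top_of_mul_ne_top_right hfin (by simp)).ne (hU.measure_ne_zero m hUne)
  have huwV : ∫⁻ y in V, powerWeight o p y * ‖u y‖ₑ ∂m < ∞ :=
    calc ∫⁻ y in V, powerWeight o p y * ‖u y‖ₑ ∂m ≤ ∫⁻ y in closure V, ‖u y‖ₑ ∂m :=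
          (lintegral_mono fun y => mul_le_of_le_one_left' (min_le_left _ _)).trans
            (lintegral_mono_set subset_closure)
      _ < ∞ := (hu.integrableOn_isCompact hVc).2
  rw [← lintegral_add_compl _ hV.measurableSet]
  exact ENNReal.add_lt_top.2 ⟨huwV, huwVc⟩

end Kernel

theorem stmt_5_general {E : Type*} [MetricSpace E] [LocallyCompactSpace E]
    [TopologicalSpace.SeparableSpace E] [MeasurableSpace E] [BorelSpace E]
    (m : Measure E) [m.Regular] [m.IsOpenPosMeasure]
    (o : E) (J : Measure (E × E))
    (D₁ D₂ p₁ p₂ : ℝ) (hD₁ : 0 < D₁) (hp₁ : 0 < p₁) (hp₁₂ : p₁ ≤ p₂)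
    (hJl : ∀ A : Set (E × E), MeasurableSet A →
      ENNReal.ofReal D₁ * ∫⁻ z in A, edist z.1 z.2 ^ (-p₁) ∂(m.prod m) ≤ J A)
    (hJu : ∀ A : Set (E × E), MeasurableSet A →
      J A ≤ ENNReal.ofReal D₂ * ∫⁻ z in A, edist z.1 z.2 ^ (-p₂) ∂(m.prod m))
    (hw : ∫⁻ y, min 1 (edist y o ^ (-p₁)) ∂m < ⊤)
    (u : E → ℝ) (hu : ∀ K : Set E, IsCompact K → IntegrableOn u K m) :
    (∫⁻ y, min 1 (edist y o ^ (-p₁)) * ENNReal.ofReal |u y| ∂m < ⊤) ↔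
    (∀ U V : Set E, IsOpen U → IsOpen V → IsCompact (closure U) → closure U ⊆ V →
      IsCompact (closure V) → o ∈ V →
      ∫⁻ z in U ×ˢ Vᶜ, ENNReal.ofReal |u z.1 - u z.2| ∂J < ⊤) := by
  have : SecondCountableTopology E := UniformSpace.secondCountable_of_separable E
  have hu' : LocallyIntegrable u m := locallyIntegrable_iff.2 hu
  simp only [← Real.enorm_eq_ofReal_abs]
  refine ⟨fun h U V hU hV hUc hUV _ _ => setLIntegral_enorm_sub_lt_top hp₁.le hp₁₂
    ofReal_ne_top hJu hw hu' h hU hUc hUV hV, fun h => ?_⟩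
  obtain ⟨r, hr, hrc⟩ := exists_isCompact_closedBall o
  have hUV : closure (ball o (r / 2)) ⊆ ball o r :=
    closure_ball_subset_closedBall.trans (closedBall_subset_ball (half_lt_self hr))
  have hVc : IsCompact (closure (ball o r)) :=
    hrc.of_isClosed_subset isClosed_closure closure_ball_subset_closedBall
  have hUc : IsCompact (closure (ball o (r / 2))) :=
    hVc.of_isClosed_subset isClosed_closure (hUV.trans subset_closure)
  refine lintegral_powerWeight_mul_lt_top hp₁.le (by simpa using hD₁) hJl hw hu' isOpen_ball
    (nonempty_ball.2 (half_pos hr)) hUc hUV isOpen_ball hVc (fun x hx y hy => ?_)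
    (h _ _ isOpen_ball isOpen_ball hUc hUV hVc (mem_ball_self hr))
  rw [edist_dist, edist_dist]
  exact ENNReal.ofReal_le_ofReal ((mem_ball.1 hx).le.trans ((half_lt_self hr).le.trans
    (not_lt.1 hy)))

/-- Let `E` be a locally compact separable metric space, `m` a Radon
measure with full support, `o ∈ E`, and `J` a Borel measure on `E × E` with
`D₁ ∫_A ρ(x,y)^{−p₁} d(m×m) ≤ J(A) ≤ D₂ ∫_A ρ(x,y)^{−p₂} d(m×m)` for all Borel `A`,
where `D₁, D₂ > 0`, `0 < p₁ ≤ p₂ < ∞`. Write `w_p(y) = min(1, ρ(y,o)^{−p})` (value `1`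
at `y = o`). Assume `w_{p₁} ∈ L¹(E;m)` and let `u` be locally `m`-integrable. Then
`w_{p₁}·|u| ∈ L¹(E;m)` iff for all open `U ⋐ V` with `closure V` compact and `o ∈ V`,
`∫_{U × (E∖V)} |u(x) − u(y)| dJ < ∞`. -/
theorem stmt_5 {E : Type*} [MetricSpace E] [LocallyCompactSpace E]
    [TopologicalSpace.SeparableSpace E] [MeasurableSpace E] [BorelSpace E]
    (m : Measure E) [m.Regular] [m.IsOpenPosMeasure]
    (o : E) (J : Measure (E × E))
    (D₁ D₂ p₁ p₂ : ℝ) (hD₁ : 0 < D₁) (hD₂ : 0 < D₂) (hp₁ : 0 < p₁) (hp₁₂ : p₁ ≤ p₂)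
    (hJl : ∀ A : Set (E × E), MeasurableSet A →
      ENNReal.ofReal D₁ * ∫⁻ z in A, edist z.1 z.2 ^ (-p₁) ∂(m.prod m) ≤ J A)
    (hJu : ∀ A : Set (E × E), MeasurableSet A →
      J A ≤ ENNReal.ofReal D₂ * ∫⁻ z in A, edist z.1 z.2 ^ (-p₂) ∂(m.prod m))
    (hw : ∫⁻ y, min 1 (edist y o ^ (-p₁)) ∂m < ⊤)
    (u : E → ℝ) (hu : ∀ K : Set E, IsCompact K → IntegrableOn u K m) :
    (∫⁻ y, min 1 (edist y o ^ (-p₁)) * ENNReal.ofReal |u y| ∂m < ⊤) ↔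
    (∀ U V : Set E, IsOpen U → IsOpen V → IsCompact (closure U) → closure U ⊆ V →
      IsCompact (closure V) → o ∈ V →
      ∫⁻ z in U ×ˢ Vᶜ, ENNReal.ofReal |u z.1 - u z.2| ∂J < ⊤) :=
  stmt_5_general m o J D₁ D₂ p₁ p₂ hD₁ hp₁ hp₁₂ hJl hJu hw u hu
end

section
/- Let u : E → ℝ be locally square-integrable with respect to m (square-integrable on every compact set). Then the following are equivalent: (3) w_{p₁} · |u|² ∈ L¹(E; m); (4) for all open sets U, V with U ⋐ V, the closure of V compact, and o ∈ V, one has ∫_{U × (E∖V)} |u(y)|² dJ(x,y) < ∞. -/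
/-!
For `x` in a bounded set and `y` outside a neighbourhood of `o`, the distances `ρ(x, y)` and
`ρ(y, o)` agree up to constant factors, so the weight `min 1 (ρ(y, o) ^ (-p))` is bounded by a
multiple of the kernel `ρ(x, y) ^ (-p)`. Conversely, if `y` stays a fixed distance away from `U`,
then for `q ≥ p` the kernel `ρ(x, y) ^ (-q)` is bounded by a multiple of that weight: by a constant
where `ρ(x, y)` is small and by `ρ(y, o) ^ (-p)` where it is large. Integrating over `x ∈ U` with
Tonelli, the bounds on `J` squeeze `∫_{U × Vᶜ} |u(y)|² dJ` between multiples of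
`m(U) ∫_{Vᶜ} w_{p₁} |u|² dm`, and `m(U) > 0` for open `U ∋ o`. The integral over the compact set
`closure V` is finite because `u` is locally square-integrable.
-/

open MeasureTheory ENNReal Metric Set Filter Topology

namespace ENNReal

theorem rpow_neg_le_rpow_neg_s8 {a b : ℝ≥0∞} {p : ℝ} (hp : 0 ≤ p) (h : a ≤ b) :
    b ^ (-p) ≤ a ^ (-p) := by
  rw [rpow_neg, rpow_neg]
  exact ENNReal.inv_le_inv.mpr (rpow_le_rpow h hp)

theorem rpow_neg_le_mul_rpow_neg {a b c : ℝ≥0∞} {p : ℝ} (hp : 0 ≤ p) (hc₀ : c ≠ 0)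
    (hc : c ≠ ⊤) (ha : a ≠ ⊤) (h : b ≤ c * a) : a ^ (-p) ≤ c ^ p * b ^ (-p) :=
  calc a ^ (-p) = c ^ p * (c ^ (-p) * a ^ (-p)) := by
        rw [← mul_assoc, ← rpow_add p (-p) hc₀ hc, add_neg_cancel, rpow_zero, one_mul]
    _ = c ^ p * (c * a) ^ (-p) := by rw [mul_rpow_of_ne_top hc ha]
    _ ≤ c ^ p * b ^ (-p) := mul_le_mul_right (rpow_neg_le_rpow_neg_s8 hp h) _

theorem le_max_mul_min_one {x K L z : ℝ≥0∞} (hK : x ≤ K) (hL : x ≤ L * z) :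
    x ≤ max K L * min 1 z := by
  rcases le_total 1 z with hz | hz
  · rw [min_eq_left hz, mul_one]; exact hK.trans (le_max_left _ _)
  · rw [min_eq_right hz]; exact hL.trans (by gcongr; exact le_max_right _ _)

theorem rpow_neg_le_mul_min_one_rpow_neg {a b c δ : ℝ≥0∞} {p q : ℝ} (hp : 0 ≤ p) (hpq : p ≤ q)
    (hc₀ : c ≠ 0) (hc : c ≠ ⊤) (hδ : δ ≠ 0) (hb : b ≠ ⊤) (hδb : δ ≤ b) (hab : a ≤ c * b) :
    b ^ (-q) ≤ max (δ ^ (-q)) (δ ^ (-(q - p)) * c ^ p) * min 1 (a ^ (-p)) := by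
  have hb₀ : b ≠ 0 := (pos_of_ne_zero hδ |>.trans_le hδb).ne'
  refine le_max_mul_min_one (rpow_neg_le_rpow_neg_s8 (hp.trans hpq) hδb) ?_
  calc b ^ (-q) = b ^ (-(q - p)) * b ^ (-p) := by rw [← rpow_add _ _ hb₀ hb]; ring_nf
    _ ≤ δ ^ (-(q - p)) * (c ^ p * a ^ (-p)) :=
        mul_le_mul' (rpow_neg_le_rpow_neg_s8 (sub_nonneg.mpr hpq) hδb)
          (rpow_neg_le_mul_rpow_neg hp hc₀ hc hb hab)
    _ = δ ^ (-(q - p)) * c ^ p * a ^ (-p) := (mul_assoc _ _ _).symm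

end ENNReal

theorem edist_le_ofReal_mul_edist {E : Type*} [PseudoMetricSpace E] {x y x' y' : E} {R δ : ℝ}
    (hR : 0 ≤ R) (hδ : 0 < δ) (hδle : δ ≤ dist x' y') (h : dist x y ≤ dist x' y' + R) :
    edist x y ≤ ENNReal.ofReal (1 + R / δ) * edist x' y' := by
  have hR' : R ≤ R / δ * dist x' y' := by
    rw [div_mul_eq_mul_div, le_div_iff₀ hδ]; exact mul_le_mul_of_nonneg_left hδle hR
  rw [edist_dist, edist_dist, ← ENNReal.ofReal_mul (by positivity)]
  exact ENNReal.ofReal_le_ofReal (by linarith)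

section Kernel

variable {α β : Type*} [MeasurableSpace α] [MeasurableSpace β] {μ : Measure α} {ν : Measure β}
  [SFinite μ] [SFinite ν] {k : α × β → ℝ≥0∞} {g w : β → ℝ≥0∞} {U : Set α} {S : Set β}

theorem setLIntegral_prod_withDensity_comp_snd (hk : Measurable k) (hg : AEMeasurable g ν)
    (hU : MeasurableSet U) (hS : MeasurableSet S) :
    ∫⁻ z in U ×ˢ S, g z.2 ∂((μ.prod ν).withDensity k)
      = ∫⁻ y in S, g y * ∫⁻ x in U, k (x, y) ∂μ ∂ν := by
  have hg₂ : AEMeasurable (fun z : α × β => g z.2) ((μ.restrict U).prod (ν.restrict S)) :=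
    hg.restrict.comp_quasiMeasurePreserving Measure.quasiMeasurePreserving_snd
  rw [restrict_withDensity (hU.prod hS), ← Measure.prod_restrict,
    lintegral_withDensity_eq_lintegral_mul₀ hk.aemeasurable hg₂,
    lintegral_prod_symm _ (hk.aemeasurable.mul hg₂)]
  refine lintegral_congr fun y => ?_
  simp only [Pi.mul_apply]
  rw [lintegral_mul_const (f := fun x => k (x, y)) _ (hk.comp measurable_prodMk_right), mul_comm]

theorem setLIntegral_prod_withDensity_comp_snd_le (hk : Measurable k) (hg : AEMeasurable g ν)
    (hw : AEMeasurable w ν) (hU : MeasurableSet U) (hS : MeasurableSet S) {C : ℝ≥0∞}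
    (h : ∀ x ∈ U, ∀ y ∈ S, k (x, y) ≤ C * w y) :
    ∫⁻ z in U ×ˢ S, g z.2 ∂((μ.prod ν).withDensity k) ≤ C * μ U * ∫⁻ y in S, w y * g y ∂ν := by
  rw [setLIntegral_prod_withDensity_comp_snd hk hg hU hS,
    ← lintegral_const_mul'' (f := fun y => w y * g y) _ (hw.mul hg).restrict]
  refine setLIntegral_mono' hS fun y hy => ?_
  calc g y * ∫⁻ x in U, k (x, y) ∂μ ≤ g y * ∫⁻ _ in U, C * w y ∂μ :=
        mul_le_mul_right (setLIntegral_mono' hU fun x hx => h x hx y hy) _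
    _ = C * μ U * (w y * g y) := by rw [setLIntegral_const]; ring

theorem mul_setLIntegral_le_setLIntegral_prod_withDensity_comp_snd (hk : Measurable k)
    (hg : AEMeasurable g ν) (hU : MeasurableSet U) (hS : MeasurableSet S) {C : ℝ≥0∞}
    (h : ∀ x ∈ U, ∀ y ∈ S, w y ≤ C * k (x, y)) :
    μ U * ∫⁻ y in S, w y * g y ∂ν ≤ C * ∫⁻ z in U ×ˢ S, g z.2 ∂((μ.prod ν).withDensity k) := by
  have hkU : Measurable fun y => ∫⁻ x in U, k (x, y) ∂μ := hk.lintegral_prod_left'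
  rw [setLIntegral_prod_withDensity_comp_snd hk hg hU hS,
    ← lintegral_const_mul'' (f := fun y => g y * ∫⁻ x in U, k (x, y) ∂μ) _
      (hg.mul hkU.aemeasurable).restrict]
  refine (lintegral_const_mul_le _ _).trans (setLIntegral_mono' hS fun y hy => ?_)
  calc μ U * (w y * g y) = (∫⁻ _ in U, w y ∂μ) * g y := by rw [setLIntegral_const]; ring
    _ ≤ (∫⁻ x in U, C * k (x, y) ∂μ) * g y :=
        mul_le_mul_left (setLIntegral_mono' hU fun x hx => h x hx y hy) _
    _ = C * (g y * ∫⁻ x in U, k (x, y) ∂μ) := by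
        rw [lintegral_const_mul (f := fun x => k (x, y)) _ (hk.comp measurable_prodMk_right)]
        ring

end Kernel

namespace MeasureTheory.Measure

variable {α : Type*} [MeasurableSpace α] {μ ν : Measure α} {c : ℝ≥0∞} {k : α → ℝ≥0∞}

theorem le_smul_withDensity_of_forall_le
    (h : ∀ A, MeasurableSet A → ν A ≤ c * ∫⁻ z in A, k z ∂μ) : ν ≤ c • μ.withDensity k :=
  le_iff.2 fun A hA => by
    rw [smul_apply, smul_eq_mul, withDensity_apply _ hA]; exact h A hA

theorem smul_withDensity_le_of_forall_le
    (h : ∀ A, MeasurableSet A → c * ∫⁻ z in A, k z ∂μ ≤ ν A) : c • μ.withDensity k ≤ ν :=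
  le_iff.2 fun A hA => by
    rw [smul_apply, smul_eq_mul, withDensity_apply _ hA]; exact h A hA

end MeasureTheory.Measure

section Metric

variable {E : Type*} [MetricSpace E] (o : E) {U V : Set E} {p q : ℝ}

theorem exists_edist_rpow_neg_le_mul_min_one_rpow_neg (hUc : IsCompact (closure U))
    (hV : IsOpen V) (hUV : closure U ⊆ V) (hp : 0 ≤ p) (hpq : p ≤ q) :
    ∃ C ≠ ⊤, ∀ x ∈ U, ∀ y ∈ Vᶜ, edist x y ^ (-q) ≤ C * min 1 (edist y o ^ (-p)) := by
  obtain ⟨δ, hδ, hthick⟩ := hUc.exists_thickening_subset_open hV hUV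
  obtain ⟨R, hR, hUR⟩ := hUc.isBounded.subset_closedBall_lt 0 o
  have hδ' : ENNReal.ofReal δ ≠ 0 := (ENNReal.ofReal_pos.2 hδ).ne'
  refine ⟨max (ENNReal.ofReal δ ^ (-q)) (ENNReal.ofReal δ ^ (-(q - p)) *
    ENNReal.ofReal (1 + R / δ) ^ p), ?_, fun x hx y hy => ?_⟩
  · exact max_ne_top (rpow_ne_top_of_ne_zero hδ' ofReal_ne_top) <| mul_ne_top
      (rpow_ne_top_of_ne_zero hδ' ofReal_ne_top) (rpow_ne_top_of_nonneg hp ofReal_ne_top)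
  have hδxy : δ ≤ dist x y := by
    by_contra! h
    exact hy <| hthick <| mem_thickening_iff.2 ⟨x, subset_closure hx, by rwa [dist_comm]⟩
  have hyo : dist y o ≤ dist x y + R := by
    linarith [dist_triangle y x o, dist_comm x y, mem_closedBall.1 (hUR (subset_closure hx))]
  refine rpow_neg_le_mul_min_one_rpow_neg hp hpq (ENNReal.ofReal_pos.2 (by positivity)).ne'
    ofReal_ne_top hδ' (edist_ne_top x y) ?_ (edist_le_ofReal_mul_edist hR.le hδ hδxy hyo)
  rw [edist_dist]
  exact ENNReal.ofReal_le_ofReal hδxy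

theorem exists_min_one_rpow_neg_le_mul_edist_rpow_neg (hU : Bornology.IsBounded U)
    (hV : V ∈ 𝓝 o) (hp : 0 ≤ p) :
    ∃ C ≠ ⊤, ∀ x ∈ U, ∀ y ∈ Vᶜ, min 1 (edist y o ^ (-p)) ≤ C * edist x y ^ (-p) := by
  obtain ⟨δ, hδ, hball⟩ := Metric.mem_nhds_iff.1 hV
  obtain ⟨R, hR, hUR⟩ := hU.subset_closedBall_lt 0 o
  refine ⟨ENNReal.ofReal (1 + R / δ) ^ p, rpow_ne_top_of_nonneg hp ofReal_ne_top,
    fun x hx y hy => ?_⟩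
  have hδyo : δ ≤ dist y o := not_lt.1 fun h => hy (hball (mem_ball.2 h))
  have hxy : dist x y ≤ dist y o + R := by
    linarith [dist_triangle_right x y o, mem_closedBall.1 (hUR hx)]
  exact (min_le_right _ _).trans <| rpow_neg_le_mul_rpow_neg hp
    (ENNReal.ofReal_pos.2 (by positivity)).ne' ofReal_ne_top (edist_ne_top y o)
    (edist_le_ofReal_mul_edist hR.le hδ hδyo hxy)

end Metric

section Directions

variable {E : Type*} [MetricSpace E] [SecondCountableTopology E] [MeasurableSpace E]
  [BorelSpace E] {m : Measure E} [SFinite m] {J : Measure (E × E)} {o : E} {g : E → ℝ≥0∞}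
  {U V : Set E} {p D : ℝ}

theorem setLIntegral_prod_compl_lt_top_of_lintegral_min_one_rpow_neg_mul_lt_top
    [IsFiniteMeasureOnCompacts m] {q : ℝ} (hp : 0 ≤ p) (hpq : p ≤ q)
    (hJ : ∀ A : Set (E × E), MeasurableSet A →
      J A ≤ ENNReal.ofReal D * ∫⁻ z in A, edist z.1 z.2 ^ (-q) ∂(m.prod m))
    (hg : AEMeasurable g m) (hfin : ∫⁻ y, min 1 (edist y o ^ (-p)) * g y ∂m < ⊤)
    (hU : MeasurableSet U) (hUc : IsCompact (closure U)) (hV : IsOpen V)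
    (hUV : closure U ⊆ V) :
    ∫⁻ z in U ×ˢ Vᶜ, g z.2 ∂J < ⊤ := by
  obtain ⟨C, hC, hCk⟩ := exists_edist_rpow_neg_le_mul_min_one_rpow_neg o hUc hV hUV hp hpq
  have hJle := Measure.le_smul_withDensity_of_forall_le hJ
  have hmU : m U < ⊤ := (measure_mono subset_closure).trans_lt hUc.measure_lt_top
  have hcompl : ∫⁻ y in Vᶜ, min 1 (edist y o ^ (-p)) * g y ∂m < ⊤ :=
    (setLIntegral_le_lintegral _ _).trans_lt hfin
  calc ∫⁻ z in U ×ˢ Vᶜ, g z.2 ∂J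
      ≤ ∫⁻ z in U ×ˢ Vᶜ, g z.2 ∂(ENNReal.ofReal D •
          (m.prod m).withDensity fun z => edist z.1 z.2 ^ (-q)) :=
        lintegral_mono' (Measure.restrict_mono subset_rfl hJle) le_rfl
    _ ≤ ENNReal.ofReal D * (C * m U * ∫⁻ y in Vᶜ, min 1 (edist y o ^ (-p)) * g y ∂m) := by
        rw [Measure.restrict_smul, lintegral_smul_measure, smul_eq_mul]
        exact mul_le_mul_right (setLIntegral_prod_withDensity_comp_snd_le
          (measurable_edist.pow_const _) hg (by fun_prop) hU hV.measurableSet.compl hCk) _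
    _ < ⊤ := mul_lt_top ofReal_lt_top (mul_lt_top (mul_lt_top hC.lt_top hmU) hcompl)

theorem lintegral_min_one_rpow_neg_mul_lt_top_of_setLIntegral_prod_compl_lt_top
    [m.IsOpenPosMeasure] (hp : 0 ≤ p) (hD : 0 < D)
    (hJ : ∀ A : Set (E × E), MeasurableSet A →
      ENNReal.ofReal D * ∫⁻ z in A, edist z.1 z.2 ^ (-p) ∂(m.prod m) ≤ J A)
    (hg : AEMeasurable g m) (hgK : ∀ K, IsCompact K → ∫⁻ y in K, g y ∂m < ⊤)
    (hU : IsOpen U) (hoU : o ∈ U) (hUb : Bornology.IsBounded U) (hV : IsOpen V)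
    (hUV : U ⊆ V) (hVc : IsCompact (closure V)) (hfin : ∫⁻ z in U ×ˢ Vᶜ, g z.2 ∂J < ⊤) :
    ∫⁻ y, min 1 (edist y o ^ (-p)) * g y ∂m < ⊤ := by
  obtain ⟨C, hC, hCk⟩ :=
    exists_min_one_rpow_neg_le_mul_edist_rpow_neg o hUb (mem_of_superset (hU.mem_nhds hoU) hUV) hp
  set I := ∫⁻ z in U ×ˢ Vᶜ, g z.2 ∂((m.prod m).withDensity fun z => edist z.1 z.2 ^ (-p))
  have hI : I < ⊤ := by
    have hJle := Measure.smul_withDensity_le_of_forall_le hJ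
    have hDI : ENNReal.ofReal D * I ≤ ∫⁻ z in U ×ˢ Vᶜ, g z.2 ∂J := by
      rw [← smul_eq_mul, ← lintegral_smul_measure, ← Measure.restrict_smul]
      exact lintegral_mono' (Measure.restrict_mono subset_rfl hJle) le_rfl
    exact lt_top_of_mul_ne_top_right (hDI.trans_lt hfin).ne (ENNReal.ofReal_pos.2 hD).ne'
  have hcompl : ∫⁻ y in Vᶜ, min 1 (edist y o ^ (-p)) * g y ∂m < ⊤ := by
    have hle := mul_setLIntegral_le_setLIntegral_prod_withDensity_comp_snd (μ := m)
      (measurable_edist.pow_const _) hg hU.measurableSet hV.measurableSet.compl hCk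
    exact lt_top_of_mul_ne_top_right ((hle.trans_lt (mul_lt_top hC.lt_top hI)).ne)
      (hU.measure_ne_zero m ⟨o, hoU⟩)
  rw [← lintegral_add_compl _ hV.measurableSet]
  refine add_lt_top.2 ⟨?_, hcompl⟩
  calc ∫⁻ y in V, min 1 (edist y o ^ (-p)) * g y ∂m ≤ ∫⁻ y in closure V, g y ∂m :=
        (lintegral_mono fun y => mul_le_of_le_one_left' (min_le_left _ _)).trans
          (lintegral_mono_set subset_closure)
    _ < ⊤ := hgK _ hVc

end Directions

theorem stmt_8_general {E : Type*} [MetricSpace E] [LocallyCompactSpace E]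
    [TopologicalSpace.SeparableSpace E] [MeasurableSpace E] [BorelSpace E]
    (m : Measure E) [m.Regular] [m.IsOpenPosMeasure]
    (o : E) (J : Measure (E × E))
    (D₁ D₂ p₁ p₂ : ℝ) (hD₁ : 0 < D₁) (hp₁ : 0 < p₁) (hp₁₂ : p₁ ≤ p₂)
    (hJl : ∀ A : Set (E × E), MeasurableSet A →
      ENNReal.ofReal D₁ * ∫⁻ z in A, edist z.1 z.2 ^ (-p₁) ∂(m.prod m) ≤ J A)
    (hJu : ∀ A : Set (E × E), MeasurableSet A →
      J A ≤ ENNReal.ofReal D₂ * ∫⁻ z in A, edist z.1 z.2 ^ (-p₂) ∂(m.prod m))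
    (u : E → ℝ) (hu : ∀ K : Set E, IsCompact K → IntegrableOn (fun x => u x ^ 2) K m) :
    (∫⁻ y, min 1 (edist y o ^ (-p₁)) * ENNReal.ofReal (u y ^ 2) ∂m < ⊤) ↔
    (∀ U V : Set E, IsOpen U → IsOpen V → IsCompact (closure U) → closure U ⊆ V →
      IsCompact (closure V) → o ∈ V →
      ∫⁻ z in U ×ˢ Vᶜ, ENNReal.ofReal (u z.2 ^ 2) ∂J < ⊤) := by
  have : SecondCountableTopology E := UniformSpace.secondCountable_of_separable E
  have hg : AEMeasurable (fun y => ENNReal.ofReal (u y ^ 2)) m :=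
    ENNReal.measurable_ofReal.comp_aemeasurable
      (locallyIntegrable_iff.2 hu).aestronglyMeasurable.aemeasurable
  constructor
  · intro hfin U V hU hV hUc hUV _ _
    exact setLIntegral_prod_compl_lt_top_of_lintegral_min_one_rpow_neg_mul_lt_top hp₁.le hp₁₂
      hJu hg hfin hU.measurableSet hUc hV hUV
  · intro hfin
    obtain ⟨U, hU, hoU, -, hUc⟩ :=
      exists_open_between_and_isCompact_closure isCompact_singleton isOpen_univ (subset_univ {o})
    obtain ⟨V, hV, hUV, -, hVc⟩ :=
      exists_open_between_and_isCompact_closure hUc isOpen_univ (subset_univ _)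
    exact lintegral_min_one_rpow_neg_mul_lt_top_of_setLIntegral_prod_compl_lt_top hp₁.le hD₁ hJl
      hg (fun K hK => (hu K hK).lintegral_lt_top) hU (singleton_subset_iff.1 hoU)
      (hUc.isBounded.subset subset_closure) hV (subset_closure.trans hUV) hVc
      (hfin U V hU hV hUc hUV hVc (hUV (subset_closure (singleton_subset_iff.1 hoU))))

/-- Let `E` be a locally compact separable metric space, `m` a Radon
measure with full support, `o ∈ E`, and `J` a Borel measure on `E × E` with
`D₁ ∫_A ρ(x,y)^{−p₁} d(m×m) ≤ J(A) ≤ D₂ ∫_A ρ(x,y)^{−p₂} d(m×m)` for all Borel `A`,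
where `D₁, D₂ > 0`, `0 < p₁ ≤ p₂ < ∞`. Write `w_p(y) = min(1, ρ(y,o)^{−p})` (value `1`
at `y = o`). Let `u` be locally `m`-square-integrable. Then
`w_{p₁}·|u|² ∈ L¹(E;m)` iff for all open `U ⋐ V` with `closure V` compact and `o ∈ V`,
`∫_{U × (E∖V)} |u(y)|² dJ < ∞`. -/
theorem stmt_8 {E : Type*} [MetricSpace E] [LocallyCompactSpace E]
    [TopologicalSpace.SeparableSpace E] [MeasurableSpace E] [BorelSpace E]
    (m : Measure E) [m.Regular] [m.IsOpenPosMeasure]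
    (o : E) (J : Measure (E × E))
    (D₁ D₂ p₁ p₂ : ℝ) (hD₁ : 0 < D₁) (hD₂ : 0 < D₂) (hp₁ : 0 < p₁) (hp₁₂ : p₁ ≤ p₂)
    (hJl : ∀ A : Set (E × E), MeasurableSet A →
      ENNReal.ofReal D₁ * ∫⁻ z in A, edist z.1 z.2 ^ (-p₁) ∂(m.prod m) ≤ J A)
    (hJu : ∀ A : Set (E × E), MeasurableSet A →
      J A ≤ ENNReal.ofReal D₂ * ∫⁻ z in A, edist z.1 z.2 ^ (-p₂) ∂(m.prod m))
    (u : E → ℝ) (hu : ∀ K : Set E, IsCompact K → IntegrableOn (fun x => u x ^ 2) K m) :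
    (∫⁻ y, min 1 (edist y o ^ (-p₁)) * ENNReal.ofReal (u y ^ 2) ∂m < ⊤) ↔
    (∀ U V : Set E, IsOpen U → IsOpen V → IsCompact (closure U) → closure U ⊆ V →
      IsCompact (closure V) → o ∈ V →
      ∫⁻ z in U ×ˢ Vᶜ, ENNReal.ofReal (u z.2 ^ 2) ∂J < ⊤) :=
  stmt_8_general m o J D₁ D₂ p₁ p₂ hD₁ hp₁ hp₁₂ hJl hJu u hu
end

section
/- For every r > 0 one has the identity I(r) = 2 e^{−r} ∫_{−∞}^{∞} (t + √(t² + 2r))^{d+α} · (t² + 2r)^{−1/2} · e^{−t²} dt, obtained from the change of variables t = √s/2 − r/√s. -/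
/-!
Substitute `s = (t + √(t² + 2r))²`, the inverse of `t = √s/2 − r/√s`. This map is a strictly
increasing bijection `ℝ → (0, ∞)`, and with `u = t + √(t² + 2r)` one has `1/u = (√(t² + 2r) − t)/(2r)`,
so the exponent `s/4 + r²/s` collapses to `t² + r` and the Jacobian is `2u²/√(t² + 2r)`.
-/

/-- `I(r) = ∫₀^∞ s^{(d+α)/2 − 1} e^{−s/4 − r²/s} ds`. -/
noncomputable def Ifun (d : ℕ) (α : ℝ) (r : ℝ) : ℝ :=
  ∫ s in Set.Ioi (0 : ℝ), s ^ (((d : ℝ) + α) / 2 - 1) * Real.exp (-(s / 4) - r ^ 2 / s)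

open Real MeasureTheory Set

section SqrtSubstitution

variable {r : ℝ}

lemma add_sqrt_sq_add_pos (hr : 0 < r) (t : ℝ) : 0 < t + √(t ^ 2 + 2 * r) := by
  have h : √(t ^ 2) < √(t ^ 2 + 2 * r) := sqrt_lt_sqrt (sq_nonneg t) (by linarith)
  rw [sqrt_sq_eq_abs] at h
  linarith [neg_le_abs t]

lemma sqrt_sq_add_pos (hr : 0 < r) (t : ℝ) : 0 < √(t ^ 2 + 2 * r) :=
  sqrt_pos.2 (by positivity)

lemma hasDerivAt_add_sqrt_sq_add_sq (hr : 0 < r) (t : ℝ) :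
    HasDerivAt (fun t => (t + √(t ^ 2 + 2 * r)) ^ 2)
      (2 * (t + √(t ^ 2 + 2 * r)) ^ 2 / √(t ^ 2 + 2 * r)) t := by
  have hinner : HasDerivAt (fun t : ℝ => t ^ 2 + 2 * r) (2 * t) t := by
    simpa using (hasDerivAt_pow 2 t).add_const (2 * r)
  have hsum := ((hasDerivAt_id' t).fun_add (hinner.sqrt (by positivity))).fun_pow 2
  refine hsum.congr_deriv ?_
  have := (sqrt_sq_add_pos hr t).ne'
  field_simp
  ring

lemma deriv_add_sqrt_sq_add_sq_pos (hr : 0 < r) (t : ℝ) :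
    0 < 2 * (t + √(t ^ 2 + 2 * r)) ^ 2 / √(t ^ 2 + 2 * r) := by
  have := add_sqrt_sq_add_pos hr t
  exact div_pos (by positivity) (sqrt_sq_add_pos hr t)

lemma strictMono_add_sqrt_sq_add_sq (hr : 0 < r) :
    StrictMono fun t => (t + √(t ^ 2 + 2 * r)) ^ 2 :=
  strictMono_of_deriv_pos fun t => by
    rw [(hasDerivAt_add_sqrt_sq_add_sq hr t).deriv]
    exact deriv_add_sqrt_sq_add_sq_pos hr t

lemma range_add_sqrt_sq_add_sq (hr : 0 < r) :
    range (fun t => (t + √(t ^ 2 + 2 * r)) ^ 2) = Ioi 0 := by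
  refine Subset.antisymm (range_subset_iff.2 fun t => pow_pos (add_sqrt_sq_add_pos hr t) 2) ?_
  intro s (hs : 0 < s)
  have hw : 0 < √s := sqrt_pos.2 hs
  have hroot : √((√s / 2 - r / √s) ^ 2 + 2 * r) = √s / 2 + r / √s := by
    rw [show (√s / 2 - r / √s) ^ 2 + 2 * r = (√s / 2 + r / √s) ^ 2 by field_simp; ring,
      sqrt_sq (by positivity)]
  refine ⟨√s / 2 - r / √s, ?_⟩
  simp only [hroot, sub_add_add_cancel, add_halves, sq_sqrt hs.le]

lemma add_sqrt_sq_div_four_add (hr : 0 < r) (t : ℝ) :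
    (t + √(t ^ 2 + 2 * r)) ^ 2 / 4 + r ^ 2 / (t + √(t ^ 2 + 2 * r)) ^ 2 = t ^ 2 + r := by
  have hv : √(t ^ 2 + 2 * r) ^ 2 = t ^ 2 + 2 * r := sq_sqrt (by positivity)
  have := (add_sqrt_sq_add_pos hr t).ne'
  field_simp
  nlinarith [hv]

theorem integral_Ioi_eq_integral_add_sqrt_sq_add {E : Type*} [NormedAddCommGroup E]
    [NormedSpace ℝ E] (hr : 0 < r) (f : ℝ → E) :
    ∫ s in Ioi 0, f s = ∫ t, (2 * (t + √(t ^ 2 + 2 * r)) ^ 2 / √(t ^ 2 + 2 * r)) •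
      f ((t + √(t ^ 2 + 2 * r)) ^ 2) := by
  rw [← range_add_sqrt_sq_add_sq hr, ← image_univ,
    integral_image_eq_integral_abs_deriv_smul MeasurableSet.univ
      (fun t _ => (hasDerivAt_add_sqrt_sq_add_sq hr t).hasDerivWithinAt)
      (strictMono_add_sqrt_sq_add_sq hr).injective.injOn f, setIntegral_univ]
  simp only [abs_of_pos (deriv_add_sqrt_sq_add_sq_pos hr _)]

lemma add_sqrt_sq_add_jacobian_mul_eq (hr : 0 < r) (p t : ℝ) :
    2 * (t + √(t ^ 2 + 2 * r)) ^ 2 / √(t ^ 2 + 2 * r) *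
      (((t + √(t ^ 2 + 2 * r)) ^ 2) ^ (p / 2 - 1) *
        exp (-((t + √(t ^ 2 + 2 * r)) ^ 2 / 4) - r ^ 2 / (t + √(t ^ 2 + 2 * r)) ^ 2)) =
    2 * exp (-r) * ((t + √(t ^ 2 + 2 * r)) ^ p * (t ^ 2 + 2 * r) ^ (-(1 : ℝ) / 2) *
      exp (-t ^ 2)) := by
  have hexp : -((t + √(t ^ 2 + 2 * r)) ^ 2 / 4) - r ^ 2 / (t + √(t ^ 2 + 2 * r)) ^ 2 =
      -t ^ 2 + -r := by
    linarith [add_sqrt_sq_div_four_add hr t]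
  have hhalf : (t ^ 2 + 2 * r) ^ (-(1 : ℝ) / 2) = (√(t ^ 2 + 2 * r))⁻¹ := by
    rw [sqrt_eq_rpow, ← rpow_neg (by positivity)]
    norm_num
  set u := t + √(t ^ 2 + 2 * r)
  have hu : 0 < u := add_sqrt_sq_add_pos hr t
  have hpow : u ^ p = (u ^ 2) ^ (p / 2 - 1) * u ^ 2 := by
    rw [← rpow_natCast u 2, ← rpow_mul hu.le, ← rpow_add hu]
    congr 1
    push_cast
    ring
  rw [hexp, exp_add, hhalf, hpow]
  field_simp

end SqrtSubstitution

theorem stmt_10_general (d : ℕ) (α : ℝ) (r : ℝ) (hr : 0 < r) :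
    Ifun d α r = 2 * Real.exp (-r) *
      ∫ t : ℝ, (t + Real.sqrt (t ^ 2 + 2 * r)) ^ ((d : ℝ) + α) *
        (t ^ 2 + 2 * r) ^ (-(1 : ℝ) / 2) * Real.exp (-t ^ 2) := by
  rw [Ifun, integral_Ioi_eq_integral_add_sqrt_sq_add hr, ← integral_const_mul]
  congr 1 with t
  exact add_sqrt_sq_add_jacobian_mul_eq hr _ t

/-- For every `r > 0`,
`I(r) = 2 e^{−r} ∫_{−∞}^{∞} (t + √(t²+2r))^{d+α} (t²+2r)^{−1/2} e^{−t²} dt`,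
obtained from the change of variables `t = √s/2 − r/√s`. -/
theorem stmt_10 (d : ℕ) (hd : 1 ≤ d) (α : ℝ) (hα : 0 < α) (hα2 : α < 2)
    (r : ℝ) (hr : 0 < r) :
    Ifun d α r = 2 * Real.exp (-r) *
      ∫ t : ℝ, (t + Real.sqrt (t ^ 2 + 2 * r)) ^ ((d : ℝ) + α) *
        (t ^ 2 + 2 * r) ^ (-(1 : ℝ) / 2) * Real.exp (-t ^ 2) :=
  stmt_10_general d α r hr
end

section
/- There exist constants C₁ = C₁(d, α) > 0 and C₂ = C₂(d, α) > 0 such that for every r > 0: C₁ e^{−r} (1 + r^{(d+α−1)/2}) ≤ Ψ(r) ≤ C₂ e^{−r} (1 + r^{(d+α−1)/2}). -/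
/-- `Ψ(r) = I(r)/I(0)`. -/
noncomputable def Psi (d : ℕ) (α : ℝ) (r : ℝ) : ℝ := Ifun d α r / Ifun d α 0

/-!
The substitution `s = (y + √(y² + 2r))²`, inverse to `y = √s/2 - r/√s`, turns the exponent
`s/4 + r²/s` into `r + y²`, so that
`I(r) = e^{-r} ∫ 2 s(y)^{(d+α)/2} (y² + 2r)^{-1/2} e^{-y²} dy`.
As `√(y² + 2r) ≤ √s(y) ≤ 2 √(y² + 2r)` (the first inequality for `y ≥ 0`), the integral is
comparable to the Gaussian moment `∫ (y² + 2r)^q e^{-y²} dy` with `q = (d+α-1)/2`, and this is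
comparable to `1 + r^q` since `max(a^q, b^q) ≤ (a + b)^q ≤ 2^q (a^q + b^q)`.
-/

open MeasureTheory Set Real

/-- The positive root of `x² - 2 y x - 2 r`, i.e. the inverse of `x ↦ x / 2 - r / x` on `(0, ∞)`. -/
noncomputable def posRoot (r y : ℝ) : ℝ := y + √(y ^ 2 + 2 * r)

section
variable {r : ℝ}

lemma sq_sqrt_sq_add_two_mul (hr : 0 ≤ r) (y : ℝ) : √(y ^ 2 + 2 * r) ^ 2 = y ^ 2 + 2 * r :=
  sq_sqrt (by positivity)

lemma posRoot_pos (hr : 0 < r) (y : ℝ) : 0 < posRoot r y := by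
  have : |y| < √(y ^ 2 + 2 * r) := (lt_sqrt (abs_nonneg y)).2 (by rw [sq_abs]; linarith)
  unfold posRoot
  linarith [neg_abs_le y]

lemma posRoot_le (hr : 0 ≤ r) (y : ℝ) : posRoot r y ≤ 2 * √(y ^ 2 + 2 * r) := by
  have : |y| ≤ √(y ^ 2 + 2 * r) := abs_le_sqrt (by linarith)
  unfold posRoot
  linarith [le_abs_self y]

lemma sqrt_le_posRoot {y : ℝ} (hy : 0 ≤ y) : √(y ^ 2 + 2 * r) ≤ posRoot r y := by
  unfold posRoot; linarith

lemma posRoot_div_two_sub (hr : 0 < r) (y : ℝ) : posRoot r y / 2 - r / posRoot r y = y := by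
  have h := posRoot_pos hr y
  field_simp
  unfold posRoot
  linear_combination sq_sqrt_sq_add_two_mul hr.le y

lemma posRoot_apply_div_two_sub (hr : 0 ≤ r) {x : ℝ} (hx : 0 < x) :
    posRoot r (x / 2 - r / x) = x := by
  have h : (x / 2 - r / x) ^ 2 + 2 * r = (x / 2 + r / x) ^ 2 := by field_simp; ring
  rw [posRoot, h, sqrt_sq (by positivity)]
  ring

lemma hasDerivAt_posRoot_sq (hr : 0 < r) (y : ℝ) :
    HasDerivAt (fun y ↦ posRoot r y ^ 2) (2 * posRoot r y ^ 2 / √(y ^ 2 + 2 * r)) y := by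
  have hw : 0 < √(y ^ 2 + 2 * r) := sqrt_pos.2 (by positivity)
  have hsq : HasDerivAt (fun y ↦ y ^ 2 + 2 * r) (2 * y) y := by
    simpa using (hasDerivAt_pow 2 y).add_const (2 * r)
  have hroot : HasDerivAt (posRoot r) (posRoot r y / √(y ^ 2 + 2 * r)) y :=
    ((hasDerivAt_id' y).add (hsq.sqrt (by positivity))).congr_deriv (by
      unfold posRoot; field_simp; ring)
  exact (hroot.pow 2).congr_deriv (by ring)

lemma range_posRoot_sq (hr : 0 < r) : range (fun y ↦ posRoot r y ^ 2) = Ioi 0 := by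
  ext s
  constructor
  · rintro ⟨y, rfl⟩
    exact pow_pos (posRoot_pos hr y) 2
  · intro hs
    exact ⟨√s / 2 - r / √s, by
      dsimp only
      rw [posRoot_apply_div_two_sub hr.le (sqrt_pos.2 hs), sq_sqrt (le_of_lt hs)]⟩

lemma injective_posRoot_sq (hr : 0 < r) : Function.Injective (fun y ↦ posRoot r y ^ 2) := by
  intro y₁ y₂ h
  have h' : posRoot r y₁ = posRoot r y₂ :=
    (pow_left_inj₀ (posRoot_pos hr y₁).le (posRoot_pos hr y₂).le two_ne_zero).1 h
  rw [← posRoot_div_two_sub hr y₁, ← posRoot_div_two_sub hr y₂, h']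

lemma posRoot_sq_div_four_add (hr : 0 < r) (y : ℝ) :
    posRoot r y ^ 2 / 4 + r ^ 2 / posRoot r y ^ 2 = r + y ^ 2 := by
  have h := posRoot_pos hr y
  conv_rhs => rw [← posRoot_div_two_sub hr y]
  field_simp
  ring

end

noncomputable def kernelIntegral (p r : ℝ) : ℝ :=
  ∫ s in Ioi 0, s ^ p * exp (-(s / 4) - r ^ 2 / s)

/-- The integrand of `kernelIntegral p r` after the substitution `s = posRoot r y ^ 2`. -/
noncomputable def kernelIntegrand (p r y : ℝ) : ℝ :=
  2 * (posRoot r y ^ 2) ^ (p + 1) / √(y ^ 2 + 2 * r) * exp (-y ^ 2)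

lemma kernelIntegral_zero {p : ℝ} (hp : -1 < p) :
    kernelIntegral p 0 = 4 ^ (p + 1) * Gamma (p + 1) := by
  have h := integral_rpow_mul_exp_neg_mul_Ioi (a := p + 1) (r := 1 / 4) (by linarith) (by norm_num)
  norm_num at h
  rw [kernelIntegral, ← h]
  refine setIntegral_congr_fun measurableSet_Ioi fun s _ ↦ ?_
  ring_nf

lemma kernelIntegral_eq_exp_neg_mul_integral (p : ℝ) {r : ℝ} (hr : 0 < r) :
    kernelIntegral p r = exp (-r) * ∫ y, kernelIntegrand p r y := by
  rw [kernelIntegral, ← range_posRoot_sq hr, ← image_univ,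
    integral_image_eq_integral_abs_deriv_smul MeasurableSet.univ
      (fun y _ ↦ (hasDerivAt_posRoot_sq hr y).hasDerivWithinAt) (injective_posRoot_sq hr).injOn,
    Measure.restrict_univ, ← integral_const_mul]
  congr 1
  ext y
  have h := posRoot_pos hr y
  have hw : 0 < √(y ^ 2 + 2 * r) := sqrt_pos.2 (by positivity)
  have hexp : -(posRoot r y ^ 2 / 4) - r ^ 2 / posRoot r y ^ 2 = -r + -y ^ 2 := by
    linarith [posRoot_sq_div_four_add hr y]
  rw [abs_of_pos (by positivity), smul_eq_mul, hexp, exp_add, kernelIntegrand,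
    rpow_add_one (by positivity)]
  ring

lemma rpow_add_one_div_sqrt {x : ℝ} (hx : 0 < x) (p : ℝ) :
    x ^ (p + 1) / √x = x ^ (p + 1 / 2) := by
  rw [sqrt_eq_rpow, ← rpow_sub hx]
  ring_nf

section
variable {p r : ℝ}

lemma kernelIntegrand_nonneg (hr : 0 < r) (y : ℝ) : 0 ≤ kernelIntegrand p r y := by
  have := posRoot_pos hr y
  unfold kernelIntegrand
  positivity

lemma kernelIntegrand_le (hp : -1 ≤ p) (hr : 0 < r) (y : ℝ) :
    kernelIntegrand p r y ≤ 2 * 4 ^ (p + 1) * ((y ^ 2 + 2 * r) ^ (p + 1 / 2) * exp (-y ^ 2)) := by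
  have hx : 0 < y ^ 2 + 2 * r := by positivity
  have hsq : posRoot r y ^ 2 ≤ 4 * (y ^ 2 + 2 * r) := by
    have := pow_le_pow_left₀ (posRoot_pos hr y).le (posRoot_le hr.le y) 2
    rwa [mul_pow, sq_sqrt_sq_add_two_mul hr.le, show (2 : ℝ) ^ 2 = 4 by norm_num] at this
  calc kernelIntegrand p r y
      ≤ 2 * (4 * (y ^ 2 + 2 * r)) ^ (p + 1) / √(y ^ 2 + 2 * r) * exp (-y ^ 2) := by
        unfold kernelIntegrand
        gcongr
        linarith
    _ = 2 * 4 ^ (p + 1) * ((y ^ 2 + 2 * r) ^ (p + 1 / 2) * exp (-y ^ 2)) := by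
        rw [mul_rpow (by norm_num) hx.le, ← rpow_add_one_div_sqrt hx]
        ring

lemma le_kernelIntegrand (hp : -1 ≤ p) (hr : 0 < r) {y : ℝ} (hy : 0 ≤ y) :
    2 * ((y ^ 2 + 2 * r) ^ (p + 1 / 2) * exp (-y ^ 2)) ≤ kernelIntegrand p r y := by
  have hx : 0 < y ^ 2 + 2 * r := by positivity
  have hsq : y ^ 2 + 2 * r ≤ posRoot r y ^ 2 := by
    have := pow_le_pow_left₀ (sqrt_nonneg _) (sqrt_le_posRoot (r := r) hy) 2
    rwa [sq_sqrt_sq_add_two_mul hr.le] at this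
  rw [← rpow_add_one_div_sqrt hx, kernelIntegrand]
  have : (y ^ 2 + 2 * r) ^ (p + 1) ≤ (posRoot r y ^ 2) ^ (p + 1) :=
    rpow_le_rpow hx.le hsq (by linarith)
  calc 2 * ((y ^ 2 + 2 * r) ^ (p + 1) / √(y ^ 2 + 2 * r) * exp (-y ^ 2))
      = 2 * (y ^ 2 + 2 * r) ^ (p + 1) / √(y ^ 2 + 2 * r) * exp (-y ^ 2) := by ring
    _ ≤ _ := by gcongr

end

lemma rpow_le_mul_exp_half {q x : ℝ} (hq : 0 ≤ q) (hx : 0 ≤ x) :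
    x ^ q ≤ (2 * q + 1) ^ q * exp (x / 2) := by
  have hk : 0 < 2 * q + 1 := by linarith
  have hlin : x ≤ (2 * q + 1) * exp (x / (2 * q + 1)) := by
    calc x ≤ (2 * q + 1) * (x / (2 * q + 1) + 1) := by field_simp; linarith
      _ ≤ _ := by gcongr; exact add_one_le_exp _
  calc x ^ q ≤ ((2 * q + 1) * exp (x / (2 * q + 1))) ^ q := rpow_le_rpow hx hlin hq
    _ = (2 * q + 1) ^ q * exp (q * x / (2 * q + 1)) := by
        rw [mul_rpow hk.le (exp_pos _).le, ← exp_mul]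
        ring_nf
    _ ≤ (2 * q + 1) ^ q * exp (x / 2) := by
        refine mul_le_mul_of_nonneg_left (exp_le_exp.2 ?_) (by positivity)
        rw [div_le_div_iff₀ hk two_pos]
        nlinarith

lemma rpow_add_le_two_rpow_mul {q a b : ℝ} (hq : 0 ≤ q) (ha : 0 ≤ a) (hb : 0 ≤ b) :
    (a + b) ^ q ≤ 2 ^ q * (a ^ q + b ^ q) := by
  have key : ∀ {a b : ℝ}, 0 ≤ a → 0 ≤ b → a ≤ b → (a + b) ^ q ≤ 2 ^ q * (a ^ q + b ^ q) := by
    intro a b ha hb hab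
    calc (a + b) ^ q ≤ (2 * b) ^ q := rpow_le_rpow (by positivity) (by linarith) hq
      _ = 2 ^ q * b ^ q := mul_rpow zero_le_two hb
      _ ≤ 2 ^ q * (a ^ q + b ^ q) := by gcongr; linarith [rpow_nonneg ha q]
  rcases le_total a b with hab | hba
  · exact key ha hb hab
  · simpa only [add_comm] using key hb ha hba

noncomputable def shiftedGaussMoment (q c : ℝ) : ℝ := ∫ y, (y ^ 2 + c) ^ q * exp (-y ^ 2)

lemma integrable_exp_neg_sq : Integrable fun y : ℝ ↦ exp (-y ^ 2) := by
  simpa using integrable_exp_neg_mul_sq one_pos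

lemma integral_exp_neg_sq : ∫ y : ℝ, exp (-y ^ 2) = √π := by
  simpa using integral_gaussian 1

section
variable {q c : ℝ}

lemma integrable_rpow_sq_add_mul_exp_neg_sq (hq : 0 ≤ q) (hc : 0 ≤ c) :
    Integrable fun y : ℝ ↦ (y ^ 2 + c) ^ q * exp (-y ^ 2) := by
  refine ((integrable_exp_neg_mul_sq (b := 1 / 2) (by norm_num)).const_mul
    ((2 * q + 1) ^ q * exp (c / 2))).mono' (by fun_prop) (ae_of_all _ fun y ↦ ?_)
  rw [norm_of_nonneg (by positivity)]
  calc (y ^ 2 + c) ^ q * exp (-y ^ 2)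
      ≤ (2 * q + 1) ^ q * exp ((y ^ 2 + c) / 2) * exp (-y ^ 2) := by
        gcongr
        exact rpow_le_mul_exp_half hq (by positivity)
    _ = (2 * q + 1) ^ q * exp (c / 2) * exp (-(1 / 2) * y ^ 2) := by
        rw [mul_assoc, mul_assoc, ← exp_add, ← exp_add]
        ring_nf

lemma shiftedGaussMoment_zero_pos (hq : 0 ≤ q) : 0 < shiftedGaussMoment q 0 := by
  rw [shiftedGaussMoment, integral_pos_iff_support_of_nonneg (fun y ↦ by positivity)
    (integrable_rpow_sq_add_mul_exp_neg_sq hq le_rfl)]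
  refine lt_of_lt_of_le ?_ (measure_mono (s := Ioi 0) fun y (hy : 0 < y) ↦ ?_)
  · simp
  · have := rpow_pos_of_pos (by positivity : 0 < y ^ 2 + 0) q
    exact (by positivity : (0 : ℝ) < _).ne'

lemma shiftedGaussMoment_ge (hq : 0 ≤ q) (hc : 0 ≤ c) :
    min (shiftedGaussMoment q 0) √π / 2 * (1 + c ^ q) ≤ shiftedGaussMoment q c := by
  have hint := integrable_rpow_sq_add_mul_exp_neg_sq hq hc
  have h₀ : shiftedGaussMoment q 0 ≤ shiftedGaussMoment q c :=
    integral_mono (integrable_rpow_sq_add_mul_exp_neg_sq hq le_rfl) hint fun y ↦ by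
      dsimp only
      gcongr
  have h₁ : √π * c ^ q ≤ shiftedGaussMoment q c := by
    rw [← integral_exp_neg_sq, ← smul_eq_mul, ← integral_smul_const]
    refine integral_mono (integrable_exp_neg_sq.smul_const _) hint fun y ↦ ?_
    rw [smul_eq_mul, mul_comm]
    gcongr
    linarith [sq_nonneg y]
  have hm := min_le_left (shiftedGaussMoment q 0) √π
  have hm' := min_le_right (shiftedGaussMoment q 0) √π
  have hcq := rpow_nonneg hc q
  nlinarith

lemma shiftedGaussMoment_le (hq : 0 ≤ q) (hc : 0 ≤ c) :
    shiftedGaussMoment q c ≤ 2 ^ q * (shiftedGaussMoment q 0 + √π) * (1 + c ^ q) := by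
  have h0 := integrable_rpow_sq_add_mul_exp_neg_sq hq le_rfl
  have hg := integrable_exp_neg_sq.const_mul (c ^ q)
  calc shiftedGaussMoment q c
      ≤ ∫ y, 2 ^ q * ((y ^ 2 + 0) ^ q * exp (-y ^ 2) + c ^ q * exp (-y ^ 2)) :=
        integral_mono (integrable_rpow_sq_add_mul_exp_neg_sq hq hc) ((h0.add hg).const_mul _)
          fun y ↦ by
            dsimp only
            rw [add_zero, ← add_mul, ← mul_assoc]
            gcongr
            exact rpow_add_le_two_rpow_mul hq (sq_nonneg y) hc
    _ = 2 ^ q * (shiftedGaussMoment q 0 + √π * c ^ q) := by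
        rw [integral_const_mul, integral_add h0 hg, integral_const_mul, integral_exp_neg_sq,
          mul_comm (c ^ q)]
        rfl
    _ ≤ 2 ^ q * (shiftedGaussMoment q 0 + √π) * (1 + c ^ q) := by
        have := shiftedGaussMoment_zero_pos hq
        have := rpow_nonneg hc q
        rw [mul_assoc]
        gcongr
        nlinarith [sqrt_nonneg π]

end

section
variable {p r : ℝ}

lemma integrable_kernelIntegrand (hp : -1 / 2 ≤ p) (hr : 0 < r) :
    Integrable (kernelIntegrand p r) :=
  ((integrable_rpow_sq_add_mul_exp_neg_sq (q := p + 1 / 2) (c := 2 * r) (by linarith)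
    (by positivity)).const_mul (2 * 4 ^ (p + 1))).mono'
    (by unfold kernelIntegrand posRoot; fun_prop)
    (ae_of_all _ fun y ↦ by
      rw [norm_of_nonneg (kernelIntegrand_nonneg hr y)]
      exact kernelIntegrand_le (by linarith) hr y)

lemma le_kernelIntegral (hp : -1 / 2 ≤ p) (hr : 0 < r) :
    exp (-r) * shiftedGaussMoment (p + 1 / 2) (2 * r) ≤ kernelIntegral p r := by
  set G : ℝ → ℝ := fun y ↦ (y ^ 2 + 2 * r) ^ (p + 1 / 2) * exp (-y ^ 2)
  have hF := integrable_kernelIntegrand hp hr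
  rw [kernelIntegral_eq_exp_neg_mul_integral p hr]
  gcongr
  calc shiftedGaussMoment (p + 1 / 2) (2 * r) = ∫ y, G |y| := by
        simp only [G, sq_abs]
        rfl
    _ = ∫ y in Ioi 0, 2 * G y := by rw [integral_comp_abs, integral_const_mul]
    _ ≤ ∫ y in Ioi 0, kernelIntegrand p r y :=
        setIntegral_mono_on
          ((integrable_rpow_sq_add_mul_exp_neg_sq (q := p + 1 / 2) (c := 2 * r) (by linarith)
            (by positivity)).const_mul 2).integrableOn hF.integrableOn measurableSet_Ioi
          fun y hy ↦ le_kernelIntegrand (by linarith) hr (le_of_lt hy)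
    _ ≤ ∫ y, kernelIntegrand p r y :=
        setIntegral_le_integral hF (ae_of_all _ (kernelIntegrand_nonneg hr))

lemma kernelIntegral_le (hp : -1 / 2 ≤ p) (hr : 0 < r) :
    kernelIntegral p r ≤
      2 * 4 ^ (p + 1) * exp (-r) * shiftedGaussMoment (p + 1 / 2) (2 * r) := by
  rw [kernelIntegral_eq_exp_neg_mul_integral p hr, shiftedGaussMoment,
    mul_comm (2 * 4 ^ (p + 1)) (exp (-r)), mul_assoc]
  refine mul_le_mul_of_nonneg_left ?_ (exp_pos _).le
  rw [← integral_const_mul]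
  exact integral_mono (integrable_kernelIntegrand hp hr)
    ((integrable_rpow_sq_add_mul_exp_neg_sq (q := p + 1 / 2) (c := 2 * r) (by linarith)
      (by positivity)).const_mul _)
    (kernelIntegrand_le (by linarith) hr)

end

lemma exists_kernelIntegral_bounds {p : ℝ} (hp : -1 / 2 ≤ p) :
    ∃ c₁ : ℝ, 0 < c₁ ∧ ∃ c₂ : ℝ, 0 < c₂ ∧ ∀ r : ℝ, 0 < r →
      c₁ * exp (-r) * (1 + r ^ (p + 1 / 2)) ≤ kernelIntegral p r ∧
      kernelIntegral p r ≤ c₂ * exp (-r) * (1 + r ^ (p + 1 / 2)) := by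
  set q := p + 1 / 2 with hq_def
  have hq : 0 ≤ q := by linarith
  set M₀ := shiftedGaussMoment q 0
  have hM₀ : 0 < M₀ := shiftedGaussMoment_zero_pos hq
  have h2q : 1 ≤ (2 : ℝ) ^ q := one_le_rpow one_le_two hq
  refine ⟨min M₀ √π / 2, by positivity, 2 * 4 ^ (p + 1) * (2 ^ q * (M₀ + √π)) * 2 ^ q,
    by positivity, fun r hr ↦ ⟨?_, ?_⟩⟩
  · have h2r : r ^ q ≤ (2 * r) ^ q := rpow_le_rpow hr.le (by linarith) hq
    calc min M₀ √π / 2 * exp (-r) * (1 + r ^ q)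
        ≤ exp (-r) * (min M₀ √π / 2 * (1 + (2 * r) ^ q)) := by
          rw [mul_right_comm, mul_comm _ (exp (-r))]
          gcongr
      _ ≤ exp (-r) * shiftedGaussMoment q (2 * r) := by
          gcongr
          exact shiftedGaussMoment_ge hq (by positivity)
      _ ≤ kernelIntegral p r := le_kernelIntegral hp hr
  · have h2r : 1 + (2 * r) ^ q ≤ 2 ^ q * (1 + r ^ q) := by
      rw [mul_rpow zero_le_two hr.le]
      nlinarith
    calc kernelIntegral p r ≤ 2 * 4 ^ (p + 1) * exp (-r) * shiftedGaussMoment q (2 * r) :=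
          kernelIntegral_le hp hr
      _ ≤ 2 * 4 ^ (p + 1) * exp (-r) * (2 ^ q * (M₀ + √π) * (1 + (2 * r) ^ q)) := by
          gcongr
          exact shiftedGaussMoment_le hq (by positivity)
      _ ≤ 2 * 4 ^ (p + 1) * exp (-r) * (2 ^ q * (M₀ + √π) * (2 ^ q * (1 + r ^ q))) := by
          gcongr
      _ = _ := by ring

theorem stmt_11_general (d : ℕ) (hd : 1 ≤ d) (α : ℝ) (hα : 0 < α) :
    ∃ C₁ : ℝ, 0 < C₁ ∧ ∃ C₂ : ℝ, 0 < C₂ ∧ ∀ r : ℝ, 0 < r →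
      C₁ * Real.exp (-r) * (1 + r ^ (((d : ℝ) + α - 1) / 2)) ≤ Psi d α r ∧
      Psi d α r ≤ C₂ * Real.exp (-r) * (1 + r ^ (((d : ℝ) + α - 1) / 2)) := by
  set p : ℝ := ((d : ℝ) + α) / 2 - 1 with hp_def
  have hp : -1 / 2 ≤ p := by
    have : (1 : ℝ) ≤ d := by exact_mod_cast hd
    linarith
  have hJ₀ : 0 < kernelIntegral p 0 := by
    rw [kernelIntegral_zero (by linarith)]
    exact mul_pos (by positivity) (Gamma_pos_of_pos (by linarith))
  obtain ⟨c₁, hc₁, c₂, hc₂, hbounds⟩ := exists_kernelIntegral_bounds hp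
  refine ⟨c₁ / kernelIntegral p 0, by positivity, c₂ / kernelIntegral p 0, by positivity,
    fun r hr ↦ ?_⟩
  have hPsi : Psi d α r = kernelIntegral p r / kernelIntegral p 0 := rfl
  rw [hPsi, show ((d : ℝ) + α - 1) / 2 = p + 1 / 2 by ring, div_mul_eq_mul_div,
    div_mul_eq_mul_div, div_mul_eq_mul_div, div_mul_eq_mul_div]
  exact ⟨div_le_div_of_nonneg_right (hbounds r hr).1 hJ₀.le,
    div_le_div_of_nonneg_right (hbounds r hr).2 hJ₀.le⟩

/-- There are `C₁ = C₁(d,α) > 0` and `C₂ = C₂(d,α) > 0` such that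
for every `r > 0`,
`C₁ e^{−r}(1 + r^{(d+α−1)/2}) ≤ Ψ(r) ≤ C₂ e^{−r}(1 + r^{(d+α−1)/2})`. -/
theorem stmt_11 (d : ℕ) (hd : 1 ≤ d) (α : ℝ) (hα : 0 < α) (hα2 : α < 2) :
    ∃ C₁ : ℝ, 0 < C₁ ∧ ∃ C₂ : ℝ, 0 < C₂ ∧ ∀ r : ℝ, 0 < r →
      C₁ * Real.exp (-r) * (1 + r ^ (((d : ℝ) + α - 1) / 2)) ≤ Psi d α r ∧
      Psi d α r ≤ C₂ * Real.exp (-r) * (1 + r ^ (((d : ℝ) + α - 1) / 2)) :=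
  stmt_11_general d hd α hα
end

section
/- Let m ≥ 0 and R > 0. Then there exists a constant c ∈ (0, 1] such that for all x, y ∈ ℝᵈ with ‖x‖ ≤ R one has c · Ψ(m^{1/α}‖y‖) ≤ Ψ(m^{1/α}‖x − y‖) ≤ c^{−1} · Ψ(m^{1/α}‖y‖). -/
/-! The substitution `s ↦ 4r²/s` preserves `s/4 + r²/s` and maps `(2r, ∞)` onto `(0, 2r)`,
shrinking the weight `s^(β-1) ds` when `β > 0`; hence at least half of `I(r)` comes from `s > 2r`.
There `(r+b)²/s - r²/s ≤ 3b/2` as soon as `b ≤ r`, so `I(r+b) ≥ e^{-3b/2} I(r) / 2`; for `r ≤ b`,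
monotonicity gives `I(r+b) ≥ I(2b) ≥ (I(2b)/I(0)) I(r)`. Since `‖x - y‖` and `‖y‖` differ by at
most `R`, this bounds `Ψ(m^{1/α}‖x - y‖) / Ψ(m^{1/α}‖y‖)` from both sides. -/

open MeasureTheory Set Real

noncomputable def besselIntegrand (β r s : ℝ) : ℝ := s ^ (β - 1) * exp (-(s / 4) - r ^ 2 / s)

/-- `Ifun d α = besselIntegral ((d + α) / 2)` definitionally; for `r > 0`,
`besselIntegral β r = 2 (2r)^β K_β(r)` with `K_β` the Macdonald function. -/
noncomputable def besselIntegral (β r : ℝ) : ℝ := ∫ s in Ioi 0, besselIntegrand β r s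

section

variable {β : ℝ}

lemma besselIntegrand_pos (r : ℝ) {s : ℝ} (hs : 0 < s) : 0 < besselIntegrand β r s :=
  mul_pos (rpow_pos_of_pos hs _) (exp_pos _)

lemma continuousOn_besselIntegrand (β r : ℝ) : ContinuousOn (besselIntegrand β r) (Ioi 0) := by
  intro s hs
  have hs0 : s ≠ 0 := (show (0 : ℝ) < s from hs).ne'
  exact ((continuousAt_rpow_const s _ (Or.inl hs0)).mul
    (continuous_exp.continuousAt.comp (by fun_prop (disch := exact hs0)))).continuousWithinAt

lemma integrableOn_besselIntegrand (hβ : 0 < β) (r : ℝ) {s : Set ℝ} (hs : s ⊆ Ioi 0) :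
    IntegrableOn (besselIntegrand β r) s := by
  have hmaj : IntegrableOn (fun s : ℝ => s ^ (β - 1) * exp (-(1 / 4) * s ^ (1 : ℝ))) (Ioi 0) :=
    integrableOn_rpow_mul_exp_neg_mul_rpow (by linarith) one_pos (by norm_num)
  refine IntegrableOn.mono_set (Integrable.mono' hmaj
    ((continuousOn_besselIntegrand β r).aestronglyMeasurable measurableSet_Ioi) ?_) hs
  filter_upwards [ae_restrict_mem measurableSet_Ioi] with s (hs : 0 < s)
  rw [norm_of_nonneg (besselIntegrand_pos r hs).le, besselIntegrand, rpow_one]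
  gcongr
  have : 0 ≤ r ^ 2 / s := by positivity
  linarith

lemma besselIntegral_pos (hβ : 0 < β) (r : ℝ) : 0 < besselIntegral β r := by
  have hnn : 0 ≤ᵐ[volume.restrict (Ioi 0)] besselIntegrand β r := by
    filter_upwards [ae_restrict_mem measurableSet_Ioi] with s hs
    exact (besselIntegrand_pos r hs).le
  rw [besselIntegral, setIntegral_pos_iff_support_of_nonneg_ae hnn
    (integrableOn_besselIntegrand hβ r subset_rfl)]
  have : Ioi (0 : ℝ) ⊆ Function.support (besselIntegrand β r) ∩ Ioi 0 :=
    fun s hs => ⟨(besselIntegrand_pos r hs).ne', hs⟩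
  exact (measure_mono this).trans_lt' (by simp)

lemma besselIntegrand_le_of_le {r₁ r₂ s : ℝ} (hs : 0 < s) (h₀ : 0 ≤ r₁) (h : r₁ ≤ r₂) :
    besselIntegrand β r₂ s ≤ besselIntegrand β r₁ s := by
  unfold besselIntegrand
  gcongr

lemma besselIntegral_le_of_le (hβ : 0 < β) {r₁ r₂ : ℝ} (h₁ : 0 ≤ r₁) (h : r₁ ≤ r₂) :
    besselIntegral β r₂ ≤ besselIntegral β r₁ :=
  setIntegral_mono_on (integrableOn_besselIntegrand hβ _ subset_rfl)
    (integrableOn_besselIntegrand hβ _ subset_rfl) measurableSet_Ioi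
    fun _ hs => besselIntegrand_le_of_le hs h₁ h

lemma image_four_mul_sq_div_Ioi {r : ℝ} (hr : 0 < r) :
    (fun t => 4 * r ^ 2 / t) '' Ioi (2 * r) = Ioo 0 (2 * r) := by
  ext s
  constructor
  · rintro ⟨t, ht : 2 * r < t, rfl⟩
    have ht0 : 0 < t := by linarith
    refine ⟨by positivity, (div_lt_iff₀ ht0).2 (by nlinarith)⟩
  · rintro ⟨hs0, hs⟩
    refine ⟨4 * r ^ 2 / s, (lt_div_iff₀ hs0).2 (by nlinarith), ?_⟩
    field_simp

lemma besselIntegrand_inversion_le (hβ : 0 < β) {r t : ℝ} (hr : 0 < r) (hrt : 2 * r ≤ t) :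
    |4 * r ^ 2 * -(t ^ 2)⁻¹| * besselIntegrand β r (4 * r ^ 2 / t) ≤ besselIntegrand β r t := by
  have ht : 0 < t := by linarith
  set u := 4 * r ^ 2 / t with hu
  have hu0 : 0 < u := by positivity
  have hut : u ≤ t := by
    rw [div_le_iff₀ ht]
    nlinarith
  have hexp : -(u / 4) - r ^ 2 / u = -(t / 4) - r ^ 2 / t := by
    rw [hu]; field_simp; ring
  have hjac : |4 * r ^ 2 * -(t ^ 2)⁻¹| = u / t := by
    rw [abs_mul, abs_neg, abs_of_pos (by positivity), abs_of_pos (by positivity), hu]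
    field_simp
  rw [hjac, besselIntegrand, besselIntegrand, hexp, ← mul_assoc]
  gcongr
  calc u / t * u ^ (β - 1) = u ^ β / t := by
        rw [rpow_sub_one hu0.ne']; field_simp
    _ ≤ t ^ β / t := by gcongr
    _ = t ^ (β - 1) := by rw [rpow_sub_one ht.ne']

lemma integral_Ioc_besselIntegrand_le (hβ : 0 < β) {r : ℝ} (hr : 0 ≤ r) :
    ∫ s in Ioc 0 (2 * r), besselIntegrand β r s ≤ ∫ s in Ioi (2 * r), besselIntegrand β r s := by
  rcases hr.eq_or_lt with rfl | hr
  · simpa using setIntegral_nonneg measurableSet_Ioi fun s hs => (besselIntegrand_pos 0 hs).le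
  have hderiv : ∀ t ∈ Ioi (2 * r), HasDerivWithinAt (fun t => 4 * r ^ 2 / t)
      (4 * r ^ 2 * -(t ^ 2)⁻¹) (Ioi (2 * r)) t := fun t ht =>
    ((hasDerivAt_inv (by linarith [mem_Ioi.mp ht])).const_mul _).hasDerivWithinAt
  have hinj : InjOn (fun t => 4 * r ^ 2 / t) (Ioi (2 * r)) := fun t₁ h₁ t₂ h₂ h => by
    have := (div_eq_div_iff (by linarith [mem_Ioi.mp h₁]) (by linarith [mem_Ioi.mp h₂])).1 h
    exact (mul_left_cancel₀ (by positivity) this).symm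
  rw [integral_Ioc_eq_integral_Ioo, ← image_four_mul_sq_div_Ioi hr,
    integral_image_eq_integral_abs_deriv_smul measurableSet_Ioi hderiv hinj]
  refine setIntegral_mono_on ?_ (integrableOn_besselIntegrand hβ r ?_) measurableSet_Ioi
    fun t (ht : 2 * r < t) => besselIntegrand_inversion_le hβ hr ht.le
  · rw [← integrableOn_image_iff_integrableOn_abs_deriv_smul measurableSet_Ioi hderiv hinj,
      image_four_mul_sq_div_Ioi hr]
    exact integrableOn_besselIntegrand hβ r Ioo_subset_Ioi_self
  · exact Ioi_subset_Ioi (by positivity)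

lemma besselIntegral_le_two_mul_integral_Ioi (hβ : 0 < β) {r : ℝ} (hr : 0 ≤ r) :
    besselIntegral β r ≤ 2 * ∫ s in Ioi (2 * r), besselIntegrand β r s := by
  have hsplit : besselIntegral β r = (∫ s in Ioc 0 (2 * r), besselIntegrand β r s) +
      ∫ s in Ioi (2 * r), besselIntegrand β r s := by
    rw [besselIntegral, ← Ioc_union_Ioi_eq_Ioi (by positivity : (0 : ℝ) ≤ 2 * r),
      setIntegral_union (Ioc_disjoint_Ioi le_rfl) measurableSet_Ioi
        (integrableOn_besselIntegrand hβ r Ioc_subset_Ioi_self)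
        (integrableOn_besselIntegrand hβ r (Ioi_subset_Ioi (by positivity)))]
  linarith [integral_Ioc_besselIntegrand_le hβ hr]

lemma exp_mul_integral_Ioi_le_besselIntegral_add (hβ : 0 < β) {r b : ℝ} (hb : 0 ≤ b)
    (hbr : b ≤ r) :
    exp (-(3 * b / 2)) * ∫ s in Ioi (2 * r), besselIntegrand β r s ≤ besselIntegral β (r + b) := by
  have hsub : Ioi (2 * r) ⊆ Ioi 0 := Ioi_subset_Ioi (by linarith)
  have hpt : ∀ s ∈ Ioi (2 * r),
      exp (-(3 * b / 2)) * besselIntegrand β r s ≤ besselIntegrand β (r + b) s := by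
    intro s (hs : 2 * r < s)
    have hs0 : 0 < s := by linarith
    rw [besselIntegrand, besselIntegrand, mul_left_comm, ← exp_add]
    gcongr
    have hnum : (r + b) ^ 2 - r ^ 2 ≤ 3 * b / 2 * s := by nlinarith
    have hdiv : (r + b) ^ 2 / s - r ^ 2 / s ≤ 3 * b / 2 := by
      rw [← sub_div, div_le_iff₀ hs0]; exact hnum
    linarith
  calc exp (-(3 * b / 2)) * ∫ s in Ioi (2 * r), besselIntegrand β r s
      = ∫ s in Ioi (2 * r), exp (-(3 * b / 2)) * besselIntegrand β r s :=
        (integral_const_mul _ _).symm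
    _ ≤ ∫ s in Ioi (2 * r), besselIntegrand β (r + b) s :=
        setIntegral_mono_on ((integrableOn_besselIntegrand hβ r hsub).const_mul _)
          (integrableOn_besselIntegrand hβ _ hsub) measurableSet_Ioi hpt
    _ ≤ besselIntegral β (r + b) :=
        setIntegral_mono_set (integrableOn_besselIntegrand hβ _ subset_rfl)
          (ae_restrict_of_forall_mem measurableSet_Ioi fun s hs =>
            (besselIntegrand_pos _ hs).le) hsub.eventuallyLE

lemma exists_mul_besselIntegral_le_of_le_add (hβ : 0 < β) {b : ℝ} (hb : 0 ≤ b) :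
    ∃ c, 0 < c ∧ c ≤ 1 ∧ ∀ u v, 0 ≤ u → 0 ≤ v → v ≤ u + b →
      c * besselIntegral β u ≤ besselIntegral β v := by
  have hJ0 := besselIntegral_pos hβ 0
  have hc₁ : 0 < besselIntegral β (2 * b) / besselIntegral β 0 :=
    div_pos (besselIntegral_pos hβ _) hJ0
  refine ⟨min (besselIntegral β (2 * b) / besselIntegral β 0) (exp (-(3 * b / 2)) / 2),
    lt_min hc₁ (by positivity), (min_le_left _ _).trans
      ((div_le_one hJ0).2 (besselIntegral_le_of_le hβ le_rfl (by positivity))),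
    fun u v hu hv huv => ?_⟩
  have hJu := besselIntegral_pos hβ u
  rcases le_total u b with hub | hbu
  · calc _ ≤ besselIntegral β (2 * b) / besselIntegral β 0 * besselIntegral β 0 :=
          mul_le_mul (min_le_left _ _) (besselIntegral_le_of_le hβ le_rfl hu) hJu.le hc₁.le
      _ = besselIntegral β (2 * b) := div_mul_cancel₀ _ hJ0.ne'
      _ ≤ besselIntegral β v := besselIntegral_le_of_le hβ hv (by linarith)
  · calc _ ≤ exp (-(3 * b / 2)) / 2 * (2 * ∫ s in Ioi (2 * u), besselIntegrand β u s) :=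
          mul_le_mul (min_le_right _ _) (besselIntegral_le_two_mul_integral_Ioi hβ hu) hJu.le
            (by positivity)
      _ = exp (-(3 * b / 2)) * ∫ s in Ioi (2 * u), besselIntegrand β u s := by ring
      _ ≤ besselIntegral β (u + b) := exp_mul_integral_Ioi_le_besselIntegral_add hβ hb hbu
      _ ≤ besselIntegral β v := besselIntegral_le_of_le hβ hv huv

end

lemma exists_mul_Psi_le_of_le_add (d : ℕ) {α : ℝ} (hα : 0 < α) {b : ℝ} (hb : 0 ≤ b) :
    ∃ c, 0 < c ∧ c ≤ 1 ∧ ∀ u v, 0 ≤ u → 0 ≤ v → v ≤ u + b → c * Psi d α u ≤ Psi d α v := by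
  have hβ : 0 < ((d : ℝ) + α) / 2 := by positivity
  obtain ⟨c, hc₀, hc₁, hc⟩ := exists_mul_besselIntegral_le_of_le_add hβ hb
  refine ⟨c, hc₀, hc₁, fun u v hu hv huv => ?_⟩
  rw [Psi, Psi, ← mul_div_assoc]
  exact div_le_div_of_nonneg_right (hc u v hu hv huv) (besselIntegral_pos hβ 0).le

theorem stmt_12_general (d : ℕ) (α : ℝ) (hα : 0 < α)
    (m : ℝ) (hm : 0 ≤ m) (R : ℝ) (hR : 0 < R) :
    ∃ c : ℝ, 0 < c ∧ c ≤ 1 ∧ ∀ x y : EuclideanSpace ℝ (Fin d), ‖x‖ ≤ R →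
      c * Psi d α (m ^ (1 / α) * ‖y‖) ≤ Psi d α (m ^ (1 / α) * ‖x - y‖) ∧
      Psi d α (m ^ (1 / α) * ‖x - y‖) ≤ c⁻¹ * Psi d α (m ^ (1 / α) * ‖y‖) := by
  have ha : 0 ≤ m ^ (1 / α) := rpow_nonneg hm _
  obtain ⟨c, hc₀, hc₁, hc⟩ := exists_mul_Psi_le_of_le_add d hα (mul_nonneg ha hR.le)
  refine ⟨c, hc₀, hc₁, fun x y hx => ⟨?_, ?_⟩⟩
  · refine hc _ _ (by positivity) (by positivity) ?_
    nlinarith [norm_sub_le x y]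
  · refine (le_inv_mul_iff₀ hc₀).2 (hc _ _ (by positivity) (by positivity) ?_)
    nlinarith [norm_sub_norm_le y x, norm_sub_rev y x]

/-- Let `m ≥ 0` and `R > 0`. There is `c ∈ (0,1]` such that for all
`x, y ∈ ℝᵈ` with `‖x‖ ≤ R`,
`c · Ψ(m^{1/α}‖y‖) ≤ Ψ(m^{1/α}‖x − y‖) ≤ c⁻¹ · Ψ(m^{1/α}‖y‖)`. -/
theorem stmt_12 (d : ℕ) (hd : 1 ≤ d) (α : ℝ) (hα : 0 < α) (hα2 : α < 2)
    (m : ℝ) (hm : 0 ≤ m) (R : ℝ) (hR : 0 < R) :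
    ∃ c : ℝ, 0 < c ∧ c ≤ 1 ∧ ∀ x y : EuclideanSpace ℝ (Fin d), ‖x‖ ≤ R →
      c * Psi d α (m ^ (1 / α) * ‖y‖) ≤ Psi d α (m ^ (1 / α) * ‖x - y‖) ∧
      Psi d α (m ^ (1 / α) * ‖x - y‖) ≤ c⁻¹ * Psi d α (m ^ (1 / α) * ‖y‖) :=
  stmt_12_general d α hα m hm R hR
end
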